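/- arXiv:2108.10722 — 8 statements merged into one kernel-verified Lean document; each statement's English description precedes it below -/
import Mathlib

section
/- Let D be the K-derivation of the polynomial ring K[x,y] determined by D(x) = x² and D(y) = y², and set g = x^{kp+2} + y^{kp+2}. Then for every polynomial f ∈ K[x,y] one has g·(D(f) + (x+y)·f) − D(g·f) = (x−y)·(y^{kp+2} − x^{kp+2})·f. In particular, the commutator of multiplication by g (the Cautis differential d_C) with the p-differential ∂_q on the Koszul complex C₁ is multiplication by (x−y)(y^{kp+2}−x^{kp+2}), which factors through multiplication by the Koszul differential x−y; hence this commutator is null-homotopic. -/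
open MvPolynomial

/-- The commutator of the Cautis differential with the `p`-differential on the Koszul
complex `C₁` is multiplication by `(x−y)(y^{kp+2}−x^{kp+2})`, which factors through the
Koszul differential `x − y`. -/
theorem cautis_commutator_factors (p : ℕ) (hp : Nat.Prime p) (hodd : Odd p)
    (K : Type*) [Field K] [CharP K p] (k : ℕ)
    (D : Derivation K (MvPolynomial (Fin 2) K) (MvPolynomial (Fin 2) K))
    (hDx : D (X 0) = X 0 ^ 2) (hDy : D (X 1) = X 1 ^ 2)
    (f : MvPolynomial (Fin 2) K) :
    (X 0 ^ (k * p + 2) + X 1 ^ (k * p + 2)) * (D f + (X 0 + X 1) * f)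
      - D ((X 0 ^ (k * p + 2) + X 1 ^ (k * p + 2)) * f)
      = (X 0 - X 1) * (X 1 ^ (k * p + 2) - X 0 ^ (k * p + 2)) * f := by
  have hcast : ((k * p + 2 : ℕ) : MvPolynomial (Fin 2) K) = 2 := by
    push_cast
    have : ((p : ℕ) : MvPolynomial (Fin 2) K) = 0 := by
      exact_mod_cast CharP.cast_eq_zero (MvPolynomial (Fin 2) K) p
    rw [this]; ring
  rw [D.leibniz, map_add, D.leibniz_pow, D.leibniz_pow, hDx, hDy, nsmul_eq_mul,
    nsmul_eq_mul, hcast]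
  simp only [smul_eq_mul, show k * p + 2 - 1 = k * p + 1 from rfl]
  ring
end

section
/- Let a₁,…,a_n be integers and ∂_f the K-linear endomorphism of K[x₁,…,x_n] given by ∂_f(g) = Σᵢ x_i²·∂g/∂x_i + (Σᵢ a_i x_i)·g. Then ∂_f^p = 0. (Thus each twisted rank-one module R^f, for f = Σᵢ a_i x_i, is a module over H_q = K[∂]/(∂^p), and there are p^n such H_q-module structures on a rank-one free module over R_n.) -/
/-!
Write `∂_f = ∑ᵢ Dᵢ` with `Dᵢ = xᵢ² ∂/∂xᵢ + aᵢ xᵢ`. On monomials `Dᵢ xᵐ = (mᵢ + aᵢ) x^(m + eᵢ)`, so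
`Dᵢ^p xᵐ` carries the factor `∏_{j<p} (mᵢ + aᵢ + j)`, a product of `p` consecutive integers, which
vanishes in characteristic `p`. Operators in different variables commute, so Frobenius gives
`∂_f^p = ∑ᵢ Dᵢ^p = 0`.
-/

open MvPolynomial

theorem prod_range_intCast_add_eq_zero {R : Type*} [CommRing R] (p : ℕ) [CharP R p] [NeZero p]
    (t : ℤ) : ∏ j ∈ Finset.range p, ((t : R) + j) = 0 := by
  have hp : (0 : ℤ) < p := by exact_mod_cast Nat.pos_of_ne_zero (NeZero.ne p)
  have hnonneg : 0 ≤ -t % p := Int.emod_nonneg _ hp.ne'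
  refine Finset.prod_eq_zero (i := (-t % p).toNat) ?_ ?_
  · exact Finset.mem_range.mpr (by have := Int.emod_lt_of_pos (-t) hp; omega)
  · have hdvd : (p : ℤ) ∣ t + -t % p := by
      rw [Int.emod_def]; exact ⟨-(-t / p), by ring⟩
    have hcast : (t : R) + ((-t % p).toNat : ℕ) = ((t + -t % p : ℤ) : R) := by
      rw [← Int.cast_natCast, Int.toNat_of_nonneg hnonneg, Int.cast_add]
    rw [hcast, CharP.intCast_eq_zero_iff R p]
    exact hdvd

theorem Finset.sum_pow_expChar_of_pairwise_commute {R ι : Type*} [Semiring R] (p : ℕ)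
    [ExpChar R p] (s : Finset ι) (f : ι → R)
    (hcomm : (s : Set ι).Pairwise fun i j => Commute (f i) (f j)) :
    (∑ i ∈ s, f i) ^ p = ∑ i ∈ s, f i ^ p := by
  classical
  induction s using Finset.induction with
  | empty => simp [zero_pow (expChar_pos R p).ne']
  | insert i s hi ih =>
    rw [Finset.coe_insert, Set.pairwise_insert_of_notMem (by exact_mod_cast hi)] at hcomm
    rw [Finset.sum_insert hi, Finset.sum_insert hi,
      add_pow_expChar_of_commute p (Commute.sum_right _ _ _ fun j hj => ?_), ih hcomm.1]
    exact (hcomm.2 j hj).1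

namespace MvPolynomial

variable {σ R : Type*} [CommRing R]

noncomputable def twistedPDeriv (i : σ) (c : R) : MvPolynomial σ R →ₗ[R] MvPolynomial σ R :=
  LinearMap.mulLeft R (X i ^ 2) ∘ₗ (pderiv i).toLinearMap + LinearMap.mulLeft R (C c * X i)

theorem twistedPDeriv_apply (i : σ) (c : R) (g : MvPolynomial σ R) :
    twistedPDeriv i c g = X i ^ 2 * pderiv i g + C c * X i * g :=
  rfl

theorem twistedPDeriv_monomial (i : σ) (c : R) (m : σ →₀ ℕ) (r : R) :
    twistedPDeriv i c (monomial m r) = ((m i : R) + c) • monomial (m + Finsupp.single i 1) r := by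
  have hX : X i * monomial m r = monomial (m + Finsupp.single i 1) r := by
    rw [X, monomial_mul, one_mul, add_comm]
  rw [twistedPDeriv_apply, pow_two, mul_assoc, X_mul_pderiv_monomial, mul_assoc, hX,
    mul_smul_comm, hX, C_mul', add_smul, Nat.cast_smul_eq_nsmul]

theorem twistedPDeriv_pow_monomial (i : σ) (c : R) (k : ℕ) (m : σ →₀ ℕ) (r : R) :
    (twistedPDeriv i c ^ k) (monomial m r) =
      (∏ j ∈ Finset.range k, ((m i : R) + c + j)) • monomial (m + Finsupp.single i k) r := by
  induction k generalizing m with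
  | zero => simp
  | succ k ih =>
    have hshift : ∀ j ∈ Finset.range k,
        (((m + Finsupp.single i 1 : σ →₀ ℕ) i : ℕ) : R) + c + j = m i + c + (j + 1) := by
      intro j _; simp only [Finsupp.add_apply, Finsupp.single_eq_same]; push_cast; ring
    rw [pow_succ, Module.End.mul_apply, twistedPDeriv_monomial, map_smul, ih, smul_smul,
      Finset.prod_congr rfl hshift, Finset.prod_range_succ', add_assoc m, ← Finsupp.single_add,
      add_comm 1 k, Nat.cast_zero, add_zero, mul_comm]
    simp only [Nat.cast_add, Nat.cast_one]

theorem twistedPDeriv_intCast_pow_char_eq_zero (p : ℕ) [CharP R p] [NeZero p] (i : σ) (a : ℤ) :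
    twistedPDeriv i (a : R) ^ p = 0 := by
  refine (basisMonomials σ R).ext fun m => ?_
  have hvanish : ∏ j ∈ Finset.range p, ((m i : R) + a + j) = 0 := by
    simpa using prod_range_intCast_add_eq_zero (R := R) p (m i + a)
  rw [coe_basisMonomials, twistedPDeriv_pow_monomial, hvanish, zero_smul, LinearMap.zero_apply]

theorem twistedPDeriv_commute {i j : σ} (hij : i ≠ j) (c d : R) :
    Commute (twistedPDeriv i c) (twistedPDeriv j d) := by
  refine (basisMonomials σ R).ext fun m => ?_
  have hi : (m + Finsupp.single j 1 : σ →₀ ℕ) i = m i := by simp [Finsupp.single_eq_of_ne hij]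
  have hj : (m + Finsupp.single i 1 : σ →₀ ℕ) j = m j := by simp [Finsupp.single_eq_of_ne hij.symm]
  simp only [coe_basisMonomials, Module.End.mul_apply, twistedPDeriv_monomial, map_smul, smul_smul,
    hi, hj, add_right_comm m]
  rw [mul_comm]

end MvPolynomial

theorem twisted_differential_pth_power_zero_general (p : ℕ) (hp : Nat.Prime p)
    (K : Type*) [Field K] [CharP K p] (n : ℕ) (a : Fin n → ℤ)
    (D : MvPolynomial (Fin n) K →ₗ[K] MvPolynomial (Fin n) K)
    (hD : ∀ g, D g = ∑ i, X i ^ 2 * pderiv i g + (∑ i, C ((a i : K)) * X i) * g) :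
    D ^ p = 0 := by
  have : Fact p.Prime := ⟨hp⟩
  have : CharP (MvPolynomial (Fin n) K →ₗ[K] MvPolynomial (Fin n) K) p :=
    charP_of_injective_algebraMap' K p
  have hsum : D = ∑ i, twistedPDeriv i (a i : K) := by
    refine LinearMap.ext fun g => ?_
    simp only [hD, LinearMap.sum_apply, twistedPDeriv_apply,
      Finset.sum_add_distrib, Finset.sum_mul]
  rw [hsum, Finset.sum_pow_expChar_of_pairwise_commute p _ _
    fun i _ j _ hij => twistedPDeriv_commute hij _ _]
  simp [twistedPDeriv_intCast_pow_char_eq_zero]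

/-- The twisted `p`-differential `∂_f(g) = Σᵢ x_i²·∂g/∂x_i + (Σᵢ a_i x_i)·g` on
`K[x₁,…,x_n]` satisfies `∂_f^p = 0`, making `R^f` an `H_q`-module. -/
theorem twisted_differential_pth_power_zero (p : ℕ) (hp : Nat.Prime p) (hodd : Odd p)
    (K : Type*) [Field K] [CharP K p] (n : ℕ) (hn : 0 < n) (a : Fin n → ℤ)
    (D : MvPolynomial (Fin n) K →ₗ[K] MvPolynomial (Fin n) K)
    (hD : ∀ g, D g = ∑ i, X i ^ 2 * pderiv i g + (∑ i, C ((a i : K)) * X i) * g) :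
    D ^ p = 0 :=
  twisted_differential_pth_power_zero_general p hp K n a D hD
end

section
/- Let a₁,…,a_n be integers and ∂_f the K-linear endomorphism of K[x₁,…,x_n] given by ∂_f(g) = Σᵢ x_i²·∂g/∂x_i + (Σᵢ a_i x_i)·g. If a_{i₀} ≡ 1 (mod p) for some index i₀, then for every j with 1 ≤ j ≤ p−1 one has ker(∂_f^j) = ∂_f^{p−j}(K[x₁,…,x_n]). (This expresses that the p-complex R^f is contractible, i.e., its slash homology vanishes, whenever some coefficient a_i equals 1.) -/
/-!
Write `∂_f = ∑ᵢ ∂ᵢ` with `∂ᵢ = xᵢ² ∂/∂xᵢ + aᵢ xᵢ`, so that `∂ᵢ xˢ = (sᵢ + aᵢ) x^(s + eᵢ)`.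
The `∂ᵢ` commute pairwise and `∂ᵢ ^ p` multiplies `xˢ` by `∏_{t < p} (sᵢ + aᵢ + t) = 0`, hence
`∂_f ^ p = 0`. If `a_{i₀} = 1`, then `h = -(division by x_{i₀}, discarding the remainder)`
satisfies the Weyl relation `∂_f h = h ∂_f + 1`. It gives `∂_f^m h^m v = m! v` for `v ∈ ker ∂_f`,
so `ker ∂_f ⊆ im ∂_f^(p-1)` because `(p-1)!` is invertible in `K`; peeling off one `∂_f` at a time
upgrades this to `ker ∂_f^j ⊆ im ∂_f^(p-j)`, and the reverse inclusion is `∂_f ^ p = 0`.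
-/

open LinearMap
open scoped Nat

theorem CharP.exists_lt_intCast_add_natCast_eq_zero (R : Type*) [Ring R] (p : ℕ) [NeZero p]
    [CharP R p] (z : ℤ) : ∃ t < p, (z : R) + t = 0 := by
  refine ⟨((-z : ℤ) : ZMod p).val, ZMod.val_lt _, ?_⟩
  rw [ZMod.natCast_val, ZMod.cast_intCast dvd_rfl, Int.cast_neg, add_neg_cancel]

theorem Finset.sum_pow_char_of_commute {A ι : Type*} [Ring A] (p : ℕ) [Fact p.Prime] [CharP A p]
    (s : Finset ι) (f : ι → A) (hf : (s : Set ι).Pairwise fun i j ↦ Commute (f i) (f j)) :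
    (∑ i ∈ s, f i) ^ p = ∑ i ∈ s, f i ^ p := by
  classical
  induction s using Finset.induction_on with
  | empty => simp [zero_pow (Fact.out : p.Prime).ne_zero]
  | insert b s hb ih =>
    rw [coe_insert, Set.pairwise_insert] at hf
    have hcomm : Commute (f b) (∑ i ∈ s, f i) :=
      Commute.sum_right _ _ _ fun i hi ↦ (hf.2 i hi (ne_of_mem_of_not_mem hi hb).symm).1
    rw [sum_insert hb, sum_insert hb, add_pow_char_of_commute _ hcomm, ih hf.1]

theorem Finsupp.apply_eq_zero_or_exists_eq_add_single_one {ι : Type*} (i : ι) (s : ι →₀ ℕ) :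
    s i = 0 ∨ ∃ t, s = t + Finsupp.single i 1 :=
  or_iff_not_imp_left.2 fun hs ↦ ⟨_, (Finsupp.sub_add_single_one_cancel hs).symm⟩

namespace Module.End

theorem range_pow_le_range_pow_of_le {R M : Type*} [Semiring R] [AddCommMonoid M] [Module R M]
    (f : Module.End R M) {a b : ℕ} (hab : a ≤ b) : range (f ^ b) ≤ range (f ^ a) := by
  obtain ⟨c, rfl⟩ := Nat.exists_eq_add_of_le hab
  rw [pow_add, mul_eq_comp]
  exact range_comp_le_range _ _

theorem ker_pow_le_range_pow_of_ker_le {R M : Type*} [Ring R] [AddCommGroup M] [Module R M]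
    {f : Module.End R M} {k : ℕ} (hk : ker f ≤ range (f ^ k)) (j : ℕ) :
    ker (f ^ j) ≤ range (f ^ (k + 1 - j)) := by
  induction j with
  | zero => simp [one_eq_id]
  | succ j ih =>
    intro v hv
    rcases le_or_gt j k with hjk | hjk
    · obtain ⟨u, hu⟩ : f v ∈ range (f ^ (k + 1 - j)) := ih <| by
        rwa [mem_ker, ← mul_apply, ← pow_succ]
      rw [show k + 1 - j = k - j + 1 by omega, pow_succ', mul_apply] at hu
      have hv' : v - (f ^ (k - j)) u ∈ ker f := by rw [mem_ker, map_sub, hu, sub_self]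
      obtain ⟨w, hw⟩ := range_pow_le_range_pow_of_le f (Nat.sub_le k j) (hk hv')
      refine ⟨w + u, ?_⟩
      rw [show k + 1 - (j + 1) = k - j by omega, map_add, hw, sub_add_cancel]
    · simp [show k + 1 - (j + 1) = 0 by omega]

section WeylRelation

variable {R V : Type*} [Semiring R] [AddCommMonoid V] [Module R V] {D h : Module.End R V}

theorem apply_pow_succ_apply_of_mul_eq_add_one (hDh : D * h = h * D + 1) {v : V} (hv : D v = 0)
    (m : ℕ) : D ((h ^ (m + 1)) v) = (m + 1) • (h ^ m) v := by
  induction m with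
  | zero => simpa [hv] using congr($hDh v)
  | succ m ih =>
    rw [pow_succ', mul_apply, ← mul_apply D, hDh, LinearMap.add_apply, mul_apply, ih, map_nsmul,
      ← mul_apply h, ← pow_succ', one_apply, succ_nsmul _ (m + 1)]

theorem pow_apply_pow_apply_of_mul_eq_add_one (hDh : D * h = h * D + 1) {v : V} (hv : D v = 0)
    (m : ℕ) : (D ^ m) ((h ^ m) v) = m ! • v := by
  induction m with
  | zero => simp
  | succ m ih =>
    rw [pow_succ, mul_apply, apply_pow_succ_apply_of_mul_eq_add_one hDh hv, map_nsmul, ih,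
      smul_smul, Nat.factorial_succ]

end WeylRelation

section DivisionRing

variable {K V : Type*} [DivisionRing K] [AddCommGroup V] [Module K V] {D h : Module.End K V}

theorem ker_le_range_pow_of_mul_eq_add_one (hDh : D * h = h * D + 1) {m : ℕ}
    (hm : (m ! : K) ≠ 0) : ker D ≤ range (D ^ m) := by
  intro v hv
  refine ⟨(m ! : K)⁻¹ • (h ^ m) v, ?_⟩
  rw [map_smul, pow_apply_pow_apply_of_mul_eq_add_one hDh hv, ← Nat.cast_smul_eq_nsmul K,
    smul_smul, inv_mul_cancel₀ hm, one_smul]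

theorem ker_pow_eq_range_pow_of_mul_eq_add_one {p : ℕ} [CharP K p] (hp : p.Prime)
    (hDh : D * h = h * D + 1) (hDp : D ^ p = 0) (j : ℕ) : ker (D ^ j) = range (D ^ (p - j)) := by
  apply le_antisymm
  · have hfact : ((p - 1)! : K) ≠ 0 := by
      rw [Ne, CharP.cast_eq_zero_iff K p, hp.dvd_factorial]
      have := hp.pos
      omega
    simpa [Nat.sub_add_cancel hp.one_le] using
      ker_pow_le_range_pow_of_ker_le (ker_le_range_pow_of_mul_eq_add_one hDh hfact) j
  · rw [range_le_ker_iff, ← mul_eq_comp, ← pow_add]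
    exact pow_eq_zero_of_le (by omega) hDp

end DivisionRing

end Module.End

namespace MvPolynomial

variable {σ R : Type*} [CommRing R]

noncomputable def twistedDiffSummand (i : σ) (c : R) : Module.End R (MvPolynomial σ R) :=
  mulLeft R (X i ^ 2) ∘ₗ (pderiv i).toLinearMap + mulLeft R (C c * X i)

theorem twistedDiffSummand_apply (i : σ) (c : R) (g : MvPolynomial σ R) :
    twistedDiffSummand i c g = X i ^ 2 * pderiv i g + C c * X i * g :=
  rfl

theorem twistedDiffSummand_monomial (i : σ) (c : R) (s : σ →₀ ℕ) (b : R) :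
    twistedDiffSummand i c (monomial s b) =
      ((s i : R) + c) • monomial (s + Finsupp.single i 1) b := by
  rw [twistedDiffSummand_apply, sq, mul_assoc, X_mul_pderiv_monomial, mul_smul_comm, mul_assoc,
    monomial_add_single, pow_one, mul_comm (X i), add_smul, C_mul', Nat.cast_smul_eq_nsmul]

noncomputable def divX (i : σ) : Module.End R (MvPolynomial σ R) where
  toFun g := g.divMonomial (Finsupp.single i 1)
  map_add' g g' := add_divMonomial g g' _
  map_smul' c g := by ext; simp [coeff_divMonomial]

theorem divX_monomial_add_single (i : σ) (s : σ →₀ ℕ) (b : R) :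
    divX i (monomial (s + Finsupp.single i 1) b) = monomial s b := by
  have : monomial (s + Finsupp.single i 1) b = monomial (Finsupp.single i 1) 1 * monomial s b := by
    rw [monomial_mul, one_mul, add_comm]
  rw [this]
  exact divMonomial_monomial_mul _ _

theorem divX_monomial_of_eq_zero {i : σ} {s : σ →₀ ℕ} (hs : s i = 0) (b : R) :
    divX i (monomial s b) = 0 := by
  classical
  ext u
  simp only [divX, coe_mk, AddHom.coe_mk, coeff_divMonomial, coeff_monomial, coeff_zero]
  rw [if_neg]
  rintro rfl
  simp at hs

theorem commute_twistedDiffSummand_divX {i i₀ : σ} (hi : i ≠ i₀) (c : R) :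
    Commute (twistedDiffSummand i c) (divX i₀) := by
  rw [commute_iff_eq]
  refine (basisMonomials σ R).ext fun s ↦ ?_
  simp only [coe_basisMonomials, Module.End.mul_apply]
  rcases Finsupp.apply_eq_zero_or_exists_eq_add_single_one i₀ s with hs | ⟨t, rfl⟩
  · have hs' : (s + Finsupp.single i 1 : σ →₀ ℕ) i₀ = 0 := by simp [hs, hi]
    rw [divX_monomial_of_eq_zero hs, map_zero, twistedDiffSummand_monomial, map_smul,
      divX_monomial_of_eq_zero hs', smul_zero]
  · rw [divX_monomial_add_single, twistedDiffSummand_monomial, twistedDiffSummand_monomial,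
      map_smul, add_right_comm, divX_monomial_add_single]
    simp [hi]

theorem divX_mul_twistedDiffSummand_one (i : σ) :
    divX i * twistedDiffSummand i (1 : R) = twistedDiffSummand i 1 * divX i + 1 := by
  refine (basisMonomials σ R).ext fun s ↦ ?_
  simp only [coe_basisMonomials, Module.End.mul_apply, LinearMap.add_apply, Module.End.one_apply]
  rcases Finsupp.apply_eq_zero_or_exists_eq_add_single_one i s with hs | ⟨t, rfl⟩
  · rw [divX_monomial_of_eq_zero hs, map_zero, twistedDiffSummand_monomial, map_smul,
      divX_monomial_add_single, hs]
    simp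
  · rw [divX_monomial_add_single, twistedDiffSummand_monomial, twistedDiffSummand_monomial,
      map_smul, divX_monomial_add_single]
    simp [add_smul]

theorem commute_twistedDiffSummand {i k : σ} (hik : i ≠ k) (c d : R) :
    Commute (twistedDiffSummand i c) (twistedDiffSummand k d) := by
  rw [commute_iff_eq]
  refine (basisMonomials σ R).ext fun s ↦ ?_
  simp only [coe_basisMonomials, Module.End.mul_apply, twistedDiffSummand_monomial, map_smul,
    smul_smul]
  simp [hik, hik.symm, add_right_comm s, mul_comm]

theorem twistedDiffSummand_pow_monomial (i : σ) (c : R) (m : ℕ) (s : σ →₀ ℕ) (b : R) :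
    (twistedDiffSummand i c ^ m) (monomial s b) =
      (∏ t ∈ Finset.range m, ((s i : R) + c + t)) • monomial (s + Finsupp.single i m) b := by
  induction m generalizing s with
  | zero => simp
  | succ m ih =>
    rw [pow_succ, Module.End.mul_apply, twistedDiffSummand_monomial, map_smul, ih, smul_smul,
      add_assoc, ← Finsupp.single_add, add_comm 1 m,
      Finset.prod_range_succ' fun t : ℕ ↦ (s i : R) + c + t]
    congr 1
    rw [mul_comm, Nat.cast_zero, add_zero]
    congr 1
    refine Finset.prod_congr rfl fun t _ ↦ ?_
    simp only [Finsupp.add_apply, Finsupp.single_eq_same]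
    push_cast
    ring

theorem twistedDiffSummand_intCast_pow_char_eq_zero (p : ℕ) [NeZero p] [CharP R p] (i : σ)
    (z : ℤ) :
    twistedDiffSummand i (z : R) ^ p = 0 := by
  refine (basisMonomials σ R).ext fun s ↦ ?_
  obtain ⟨t, htp, ht⟩ := CharP.exists_lt_intCast_add_natCast_eq_zero R p (s i + z)
  rw [coe_basisMonomials, twistedDiffSummand_pow_monomial, LinearMap.zero_apply,
    Finset.prod_eq_zero (Finset.mem_range.2 htp) (by push_cast at ht; exact ht), zero_smul]

section Sum

variable [Fintype σ]

theorem divX_mul_sum_twistedDiffSummand (c : σ → R) {i₀ : σ} (hc : c i₀ = 1) :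
    divX i₀ * ∑ i, twistedDiffSummand i (c i) =
      (∑ i, twistedDiffSummand i (c i)) * divX i₀ + 1 := by
  classical
  have hcomm (i) (hi : i ∈ Finset.univ.erase i₀) :
      divX i₀ * twistedDiffSummand i (c i) = twistedDiffSummand i (c i) * divX i₀ :=
    (commute_twistedDiffSummand_divX (Finset.ne_of_mem_erase hi) _).eq.symm
  rw [Finset.sum_mul, Finset.mul_sum, ← Finset.add_sum_erase _ _ (Finset.mem_univ i₀),
    ← Finset.add_sum_erase _ _ (Finset.mem_univ i₀), hc, divX_mul_twistedDiffSummand_one,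
    Finset.sum_congr rfl hcomm]
  abel

theorem sum_twistedDiffSummand_mul_neg_divX (c : σ → R) {i₀ : σ} (hc : c i₀ = 1) :
    (∑ i, twistedDiffSummand i (c i)) * -divX i₀ =
      -divX i₀ * ∑ i, twistedDiffSummand i (c i) + 1 := by
  have h := divX_mul_sum_twistedDiffSummand c hc
  simp only [Module.End.mul_eq_comp, LinearMap.comp_neg, LinearMap.neg_comp] at h ⊢
  rw [h]
  abel

theorem sum_twistedDiffSummand_intCast_pow_char_eq_zero (p : ℕ) [Fact p.Prime] [CharP R p]
    (a : σ → ℤ) :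
    (∑ i, twistedDiffSummand i (a i : R)) ^ p = 0 := by
  have : CharP (Module.End R (MvPolynomial σ R)) p :=
    charP_of_injective_algebraMap (R := R)
      (fun r r' h ↦ by simpa [smul_eq_C_mul] using congr($h 1)) p
  rw [Finset.sum_pow_char_of_commute p _ _ fun i _ k _ hik ↦ commute_twistedDiffSummand hik _ _]
  exact Finset.sum_eq_zero fun i _ ↦ twistedDiffSummand_intCast_pow_char_eq_zero p i (a i)

end Sum

end MvPolynomial

open MvPolynomial

theorem twisted_complex_contractible_general (p : ℕ) (hp : Nat.Prime p)
    (K : Type*) [Field K] [CharP K p] (n : ℕ) (a : Fin n → ℤ)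
    (D : MvPolynomial (Fin n) K →ₗ[K] MvPolynomial (Fin n) K)
    (hD : ∀ g, D g = ∑ i, X i ^ 2 * pderiv i g + (∑ i, C ((a i : K)) * X i) * g)
    (i₀ : Fin n) (ha : a i₀ ≡ 1 [ZMOD (p : ℤ)])
    (j : ℕ) :
    LinearMap.ker (D ^ j) = LinearMap.range (D ^ (p - j)) := by
  have : Fact p.Prime := ⟨hp⟩
  have hDsum : D = ∑ i, twistedDiffSummand i (a i : K) := LinearMap.ext fun g ↦ by
    simp only [hD, LinearMap.sum_apply, twistedDiffSummand_apply, Finset.sum_add_distrib,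
      Finset.sum_mul]
  have ha₀ : (a i₀ : K) = 1 := by simpa using (CharP.intCast_eq_intCast K p).2 ha
  subst hDsum
  exact Module.End.ker_pow_eq_range_pow_of_mul_eq_add_one hp
    (sum_twistedDiffSummand_mul_neg_divX (fun i ↦ (a i : K)) ha₀)
    (sum_twistedDiffSummand_intCast_pow_char_eq_zero p a) j

/-- If some coefficient `a_{i₀}` of `f = Σᵢ a_i x_i` is congruent to `1` mod `p`, then the
twisted `p`-complex `R^f` is contractible: `ker(∂_f^j) = im(∂_f^{p−j})` for `1 ≤ j ≤ p−1`. -/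
theorem twisted_complex_contractible (p : ℕ) (hp : Nat.Prime p) (hodd : Odd p)
    (K : Type*) [Field K] [CharP K p] (n : ℕ) (hn : 0 < n) (a : Fin n → ℤ)
    (D : MvPolynomial (Fin n) K →ₗ[K] MvPolynomial (Fin n) K)
    (hD : ∀ g, D g = ∑ i, X i ^ 2 * pderiv i g + (∑ i, C ((a i : K)) * X i) * g)
    (i₀ : Fin n) (ha : a i₀ ≡ 1 [ZMOD (p : ℤ)])
    (j : ℕ) (hj1 : 1 ≤ j) (hj2 : j ≤ p - 1) :
    LinearMap.ker (D ^ j) = LinearMap.range (D ^ (p - j)) :=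
  twisted_complex_contractible_general p hp K n a D hD i₀ ha j
end

section
/- Let b be an integer with 2 ≤ b ≤ p+1 and ∂_b the K-linear endomorphism of K[x] given by ∂_b(f) = x²·f′ + b·x·f. Then the principal ideal J = (x^{p+1−b}) of K[x] satisfies ∂_b(J) ⊆ J, and for every j with 1 ≤ j ≤ p−1 one has ker(∂_b^j) ∩ J = ∂_b^{p−j}(J). (Thus J is a contractible sub-p-complex of R^f, so the quotient map π : R^f → R^f/(I·R^f) is a quasi-isomorphism of p-complexes.) -/
open Polynomial Finset

private lemma nt_all (p : ℕ) (hp : 0 < p) (s : ℤ) : ∃ i : ℕ, i < p ∧ (p:ℤ) ∣ s + i := by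
  refine ⟨((-s) % (p:ℤ)).toNat, ?_, ?_⟩
  · have h1 : 0 ≤ (-s) % (p:ℤ) := Int.emod_nonneg _ (by exact_mod_cast hp.ne')
    have h2 : (-s) % (p:ℤ) < p := Int.emod_lt_of_pos _ (by exact_mod_cast hp)
    omega
  · have h1 : 0 ≤ (-s) % (p:ℤ) := Int.emod_nonneg _ (by exact_mod_cast hp.ne')
    rw [Int.toNat_of_nonneg h1]
    have h := Int.emod_add_mul_ediv (-s) (p:ℤ)
    exact ⟨-((-s)/(p:ℤ)), by linarith⟩

private lemma nt_main (p : ℕ) (hp2 : 2 ≤ p) (j : ℕ) (hj1 : 1 ≤ j) (hj2 : j ≤ p - 1)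
    (t : ℤ) (ht : (p:ℤ) + 1 ≤ t) (i : ℕ) (hi : i < j) (hdvd : (p:ℤ) ∣ t + i) :
    2 * (p:ℤ) + 1 - j ≤ t ∧
      ∀ i' : ℕ, i' < p - j → ¬ (p:ℤ) ∣ t - ((p - j : ℕ):ℤ) + i' := by
  constructor
  · have hpos : 0 < t + i - p := by omega
    have hdvd2 : (p:ℤ) ∣ t + i - p := dvd_sub hdvd dvd_rfl
    have := Int.le_of_dvd hpos hdvd2
    omega
  · intro i' hi' hdvd'
    have hd3 : (p:ℤ) ∣ (t + i) - (t - ((p - j : ℕ):ℤ) + i') := dvd_sub hdvd hdvd'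
    have hpos : 0 < (t + i) - (t - ((p - j : ℕ):ℤ) + i') := by omega
    have := Int.le_of_dvd hpos hd3
    omega

private lemma coeffD0 {K : Type*} [Field K] {b : ℤ} {D : Polynomial K → Polynomial K}
    (hD : ∀ f, D f = X ^ 2 * derivative f + C ((b : K)) * (X * f)) (f : Polynomial K) :
    (D f).coeff 0 = 0 := by
  simp [hD f, pow_two, mul_assoc, Polynomial.mul_coeff_zero]

private lemma coeffD1 {K : Type*} [Field K] {b : ℤ} {D : Polynomial K → Polynomial K}
    (hD : ∀ f, D f = X ^ 2 * derivative f + C ((b : K)) * (X * f)) (f : Polynomial K)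
    (k : ℕ) : (D f).coeff (k + 1) = ((((k:ℤ) + b : ℤ)) : K) * f.coeff k := by
  rcases k with _ | k
  · simp [hD f, pow_two, mul_assoc, Polynomial.mul_coeff_zero, coeff_X_mul]
  · rw [hD f, coeff_add, pow_two, mul_assoc, coeff_X_mul, coeff_X_mul, coeff_derivative,
      coeff_C_mul, coeff_X_mul]
    push_cast
    ring

private lemma coeff_iter_lt {K : Type*} [Field K] {b : ℤ} {D : Polynomial K → Polynomial K}
    (hD : ∀ f, D f = X ^ 2 * derivative f + C ((b : K)) * (X * f)) :
    ∀ (j : ℕ) (f : Polynomial K) (n : ℕ), n < j → (D^[j] f).coeff n = 0 := by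
  intro j
  induction j with
  | zero => intro f n h; omega
  | succ j ih =>
    intro f n h
    rw [Function.iterate_succ_apply']
    rcases n with _ | n
    · exact coeffD0 hD _
    · rw [coeffD1 hD, ih f n (by omega), mul_zero]

private lemma coeff_iter {K : Type*} [Field K] {b : ℤ} {D : Polynomial K → Polynomial K}
    (hD : ∀ f, D f = X ^ 2 * derivative f + C ((b : K)) * (X * f)) :
    ∀ (j : ℕ) (f : Polynomial K) (k : ℕ),
      (D^[j] f).coeff (k + j)
        = (∏ i ∈ Finset.range j, ((((k:ℤ) + b + (i:ℤ) : ℤ)) : K)) * f.coeff k := by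
  intro j
  induction j with
  | zero => simp
  | succ j ih =>
    intro f k
    rw [Function.iterate_succ_apply', show k + (j+1) = (k+j) + 1 from rfl, coeffD1 hD,
      ih f k, Finset.prod_range_succ]
    push_cast
    ring

/-- For `2 ≤ b ≤ p+1`, the principal ideal `J = (x^{p+1−b})` of `K[x]` is stable under the
twisted `p`-differential `∂_b`, and `J` is a contractible sub-`p`-complex:
`ker(∂_b^j) ∩ J = ∂_b^{p−j}(J)` for `1 ≤ j ≤ p−1`. -/
theorem twisted_ideal_contractible (p : ℕ) (hp : Nat.Prime p) (hodd : Odd p)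
    (K : Type*) [Field K] [CharP K p] (b : ℤ) (hb1 : 2 ≤ b) (hb2 : b ≤ (p : ℤ) + 1)
    (D : Polynomial K → Polynomial K)
    (hD : ∀ f, D f = Polynomial.X ^ 2 * Polynomial.derivative f
      + Polynomial.C ((b : K)) * (Polynomial.X * f)) :
    (∀ f ∈ Ideal.span {Polynomial.X ^ ((p : ℤ) + 1 - b).toNat},
        D f ∈ Ideal.span {Polynomial.X ^ ((p : ℤ) + 1 - b).toNat}) ∧
    (∀ j : ℕ, 1 ≤ j → j ≤ p - 1 →
      {f | D^[j] f = 0} ∩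
          ((Ideal.span {Polynomial.X ^ ((p : ℤ) + 1 - b).toNat} : Ideal (Polynomial K)) :
            Set (Polynomial K)) =
        D^[p - j] ''
          ((Ideal.span {Polynomial.X ^ ((p : ℤ) + 1 - b).toNat} : Ideal (Polynomial K)) :
            Set (Polynomial K))) := by
  set m : ℕ := ((p:ℤ) + 1 - b).toNat with hmdef
  have hm : (m:ℤ) = (p:ℤ) + 1 - b := Int.toNat_of_nonneg (by omega)
  have hp2 := hp.two_le
  have hmem : ∀ f : Polynomial K, f ∈ Ideal.span {(X : Polynomial K) ^ m}
      ↔ ∀ n < m, f.coeff n = 0 := by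
    intro f
    rw [Ideal.mem_span_singleton, Polynomial.X_pow_dvd_iff]
  constructor
  · intro f hf
    rw [hmem] at hf ⊢
    intro n hn
    rcases n with _ | n
    · exact coeffD0 hD f
    · rw [coeffD1 hD, hf n (by omega), mul_zero]
  · intro j hj1 hj2
    generalize hedef : p - j = e
    have hje : j + e = p := by omega
    have key : ∀ f : Polynomial K, D^[j] f = 0 → (∀ n < m, f.coeff n = 0) →
        ∀ n : ℕ, f.coeff n ≠ 0 →
          m + e ≤ n ∧ (∏ i ∈ Finset.range e, (((((n - e : ℕ):ℤ) + b + (i:ℤ) : ℤ)) : K)) ≠ 0 := by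
      intro f hker hf n hn
      have h1 : (∏ i ∈ Finset.range j, ((((n:ℤ) + b + (i:ℤ) : ℤ)) : K)) * f.coeff n = 0 := by
        rw [← coeff_iter hD j f n, hker, Polynomial.coeff_zero]
      have h2 : (∏ i ∈ Finset.range j, ((((n:ℤ) + b + (i:ℤ) : ℤ)) : K)) = 0 :=
        (mul_eq_zero.mp h1).resolve_right hn
      obtain ⟨i, hi, hzero⟩ := Finset.prod_eq_zero_iff.mp h2
      rw [CharP.intCast_eq_zero_iff K p] at hzero
      have hnm : m ≤ n := by
        by_contra h
        exact hn (hf n (by omega))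
      have hmain := nt_main p hp2 j hj1 hj2 ((n:ℤ) + b) (by omega) i
        (Finset.mem_range.mp hi) hzero
      have hne : m + e ≤ n := by
        have := hmain.1
        omega
      refine ⟨hne, ?_⟩
      intro hzero'
      obtain ⟨i', hi', hz'⟩ := Finset.prod_eq_zero_iff.mp hzero'
      rw [CharP.intCast_eq_zero_iff K p] at hz'
      have heq : (((n - e : ℕ):ℤ) + b + (i':ℤ))
          = ((n:ℤ) + b) - ((p - j : ℕ):ℤ) + (i':ℤ) := by
        omega
      rw [heq] at hz'
      exact hmain.2 i' (by have := Finset.mem_range.mp hi'; omega) hz'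
    ext f
    simp only [Set.mem_inter_iff, Set.mem_setOf_eq, SetLike.mem_coe, Set.mem_image, hmem]
    constructor
    · rintro ⟨hker, hf⟩
      set w : ℕ → K := fun k =>
        f.coeff (k + e) / ∏ i ∈ Finset.range e, ((((k:ℤ) + b + (i:ℤ) : ℤ)) : K) with hwdef
      set g : Polynomial K :=
        ∑ k ∈ Finset.range (f.natDegree + 1), Polynomial.monomial k (w k) with hgdef
      have hw0 : ∀ k, f.natDegree < k → w k = 0 := by
        intro k hk
        have h0 : f.coeff (k + e) = 0 := coeff_eq_zero_of_natDegree_lt (by omega)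
        simp [hwdef, h0]
      have hg : ∀ n, g.coeff n = w n := by
        intro n
        rw [hgdef, Polynomial.finset_sum_coeff]
        simp only [Polynomial.coeff_monomial]
        rw [Finset.sum_ite_eq' (Finset.range (f.natDegree + 1)) n w]
        split_ifs with h
        · rfl
        · exact (hw0 n (by simp at h; omega)).symm
      refine ⟨g, ?_, ?_⟩
      · intro n hn
        rw [hg]
        rcases eq_or_ne (f.coeff (n + e)) 0 with h | h
        · simp [hwdef, h]
        · have := (key f hker hf (n + e) h).1
          omega
      · ext n
        rcases lt_or_ge n e with h | h
        · rw [coeff_iter_lt hD e _ n h]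
          by_contra h2
          have h3 : f.coeff n ≠ 0 := fun h4 => h2 h4.symm
          have := (key f hker hf n h3).1
          omega
        · obtain ⟨k, rfl⟩ : ∃ k, n = k + e := ⟨n - e, by omega⟩
          rw [coeff_iter hD e g k, hg]
          rcases eq_or_ne (f.coeff (k + e)) 0 with h0 | h0
          · simp [hwdef, h0]
          · have h1 := (key f hker hf (k + e) h0).2
            have h2 : (k + e) - e = k := by omega
            rw [h2] at h1
            rw [hwdef]
            simp only []
            rw [mul_comm, div_mul_cancel₀ _ h1]
    · rintro ⟨g, hg, rfl⟩
      constructor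
      · rw [← Function.iterate_add_apply, hje]
        ext n
        rcases lt_or_ge n p with h | h
        · rw [coeff_iter_lt hD p g n h, Polynomial.coeff_zero]
        · obtain ⟨k, rfl⟩ : ∃ k, n = k + p := ⟨n - p, by omega⟩
          rw [coeff_iter hD p g k, Polynomial.coeff_zero]
          obtain ⟨i, hi, hdvd⟩ := nt_all p (by omega) ((k:ℤ) + b)
          have hzero : ((((k:ℤ) + b + (i:ℤ) : ℤ)) : K) = 0 := by
            rw [CharP.intCast_eq_zero_iff K p]; exact hdvd
          rw [Finset.prod_eq_zero (Finset.mem_range.mpr hi) hzero, zero_mul]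
      · intro n hn
        rcases lt_or_ge n e with h | h
        · exact coeff_iter_lt hD e g n h
        · obtain ⟨k, rfl⟩ : ∃ k, n = k + e := ⟨n - e, by omega⟩
          rw [coeff_iter hD e g k, hg k (by omega), mul_zero]
end

section
/- Let b be an integer with 2 ≤ b ≤ p and ∂_b the K-linear endomorphism of K[x] given by ∂_b(f) = x²·f′ + b·x·f. Then ∂_b descends to the quotient K[x]/(x^{p+1−b}), and this quotient, as a module over H_q = K[∂]/(∂^p) with ∂ acting by the induced map, is cyclic generated by the image of 1 and is isomorphic to K[∂]/(∂^{p+1−b}). (This is the one-variable case of the computation of the slash homology of R^f, giving the balanced H_q-module V_{p−b}.) -/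
/-!
Since `∂_b (Xᵏ) = (b + k) Xᵏ⁺¹`, the map `∂_b` raises the `X`-adic order, so it descends to
`K[X]/(Xⁿ)` with `n = p + 1 − b`, and `∂_b ^ p = 0` there because `n ≤ p`. Iterating on `1` gives
`∂_b ^ i (1) = b (b + 1) ⋯ (b + i − 1) Xⁱ`; for `i < n` the factors are integers in `[b, p − 1]`,
hence units in characteristic `p`, so `1` is a cyclic vector. Then `f ↦ f(∂_b) 1` is a surjective,
hence bijective, endomorphism of the finite-dimensional space `K[X]/(Xⁿ)` carrying multiplication
by `X` to `∂_b`, and its inverse is the isomorphism with `K[∂]/(∂ⁿ)`.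
-/

open Polynomial

namespace Ideal.Quotient

variable {K A M : Type*} [CommRing K] [CommRing A] [Algebra K A] [AddCommGroup M] [Module K M]

def liftLinear (I : Ideal A) (f : A →ₗ[K] M) (hf : ∀ a ∈ I, f a = 0) : (A ⧸ I) →ₗ[K] M :=
  (I.restrictScalars K).liftQ f hf ∘ₗ (Submodule.Quotient.restrictScalarsEquiv K I).symm.toLinearMap

@[simp]
theorem liftLinear_mk (I : Ideal A) (f : A →ₗ[K] M) (hf : ∀ a ∈ I, f a = 0) (a : A) :
    liftLinear I f hf (mk I a) = f a :=
  rfl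

end Ideal.Quotient

theorem ascPochhammer_eval_intCast_ne_zero {K : Type*} [Field K] (p : ℕ) [CharP K p] {b : ℤ}
    {i : ℕ} (hb : 0 < b) (hbi : b + i ≤ p) : (ascPochhammer K i).eval (b : K) ≠ 0 := by
  rw [Ne, ascPochhammer_eval_eq_zero_iff]
  rintro ⟨k, hk, hkb⟩
  have hdvd : (p : ℤ) ∣ k + b :=
    (CharP.intCast_eq_zero_iff K p _).mp (by push_cast; rw [hkb, neg_add_cancel])
  have := Int.le_of_dvd (by omega) hdvd
  omega

namespace Polynomial

section TwistedDiff

variable {R : Type*} [CommRing R]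

noncomputable def twistedDiff (b : R) : R[X] →ₗ[R] R[X] :=
  LinearMap.mulLeft R (X ^ 2) ∘ₗ derivative + LinearMap.mulLeft R (C b * X)

theorem twistedDiff_apply (b : R) (f : R[X]) :
    twistedDiff b f = X ^ 2 * derivative f + C b * (X * f) := by
  simp [twistedDiff, mul_left_comm]

theorem twistedDiff_X_pow_mul (b : R) (m : ℕ) (g : R[X]) :
    twistedDiff b (X ^ m * g) = X ^ (m + 1) * (C (b + m) * g + X * derivative g) := by
  rw [twistedDiff_apply, derivative_mul, derivative_X_pow]
  rcases m with _ | m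
  · simp only [pow_zero, Nat.cast_zero, map_zero, C_add]
    ring
  · simp only [Nat.add_sub_cancel, Nat.cast_add, Nat.cast_one, map_add, map_one]
    ring

theorem twistedDiff_X_pow (b : R) (k : ℕ) :
    twistedDiff b (X ^ k) = (b + k) • X ^ (k + 1) := by
  simpa [smul_eq_C_mul, mul_comm] using twistedDiff_X_pow_mul b k 1

theorem twistedDiff_mem_span_X_pow_succ (b : R) {m : ℕ} {f : R[X]}
    (hf : f ∈ Ideal.span {X ^ m}) : twistedDiff b f ∈ Ideal.span {X ^ (m + 1)} := by
  obtain ⟨g, rfl⟩ := Ideal.mem_span_singleton.mp hf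
  rw [twistedDiff_X_pow_mul]
  exact Ideal.mul_mem_right _ _ (Ideal.mem_span_singleton_self _)

theorem twistedDiff_pow_apply_mem_span_X_pow (b : R) (k : ℕ) (f : R[X]) :
    (twistedDiff b ^ k) f ∈ Ideal.span {X ^ k} := by
  induction k with
  | zero => simp
  | succ k ih =>
    rw [pow_succ' (twistedDiff b), Module.End.mul_apply]
    exact twistedDiff_mem_span_X_pow_succ b ih

theorem twistedDiff_pow_apply_one (b : R) (i : ℕ) :
    (twistedDiff b ^ i) 1 = (ascPochhammer R i).eval b • X ^ i := by
  induction i with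
  | zero => simp
  | succ i ih =>
    rw [pow_succ' (twistedDiff b), Module.End.mul_apply, ih, map_smul, twistedDiff_X_pow,
      smul_smul, ascPochhammer_succ_eval]

end TwistedDiff

section QuotientByXPow

variable {K : Type*} [Field K]

local notation "Q" n => K[X] ⧸ Ideal.span {(X : K[X]) ^ n}

theorem span_range_mk_X_pow (I : Ideal K[X]) :
    Submodule.span K (Set.range fun i : ℕ => Ideal.Quotient.mk I (X ^ i)) = ⊤ := by
  have hsurj : LinearMap.range (Ideal.Quotient.mkₐ K I).toLinearMap = ⊤ :=
    LinearMap.range_eq_top.mpr (Ideal.Quotient.mkₐ_surjective K I)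
  have hmon : Submodule.span K (Set.range fun i : ℕ => (X : K[X]) ^ i) = ⊤ := by
    simpa [coe_basisMonomials, monomial_one_right_eq_X_pow] using (basisMonomials K).span_eq
  rw [← hsurj, LinearMap.range_eq_map, ← hmon, Submodule.map_span, ← Set.range_comp]
  rfl

theorem exists_linearEquiv_mul_X_of_cyclic {n : ℕ} (T : (Q n) →ₗ[K] (Q n)) (v : Q n)
    (hv : (T ^ n) v = 0) (hspan : Submodule.span K (Set.range fun i : ℕ => (T ^ i) v) = ⊤) :
    ∃ e : (Q n) ≃ₗ[K] (Q n), ∀ w, e (T w) = Ideal.Quotient.mk _ X * e w := by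
  let φ : (Q n) →ₗ[K] (Q n) := Ideal.Quotient.liftLinear _
    (LinearMap.applyₗ v ∘ₗ (aeval T).toLinearMap) fun f hf => by
      obtain ⟨g, rfl⟩ := Ideal.mem_span_singleton.mp hf
      simp [mul_comm (X ^ n) g, hv]
  have hφ_mk : ∀ f, φ (Ideal.Quotient.mk _ f) = aeval T f v :=
    Ideal.Quotient.liftLinear_mk _ _ _
  have hφ_mul_X : ∀ u, φ (Ideal.Quotient.mk _ X * u) = T (φ u) := by
    intro u
    obtain ⟨f, rfl⟩ := Ideal.Quotient.mk_surjective u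
    rw [← map_mul, hφ_mk, hφ_mk, map_mul, aeval_X, Module.End.mul_apply]
  have hφ_surj : Function.Surjective φ := by
    rw [← LinearMap.range_eq_top, eq_top_iff, ← hspan, Submodule.span_le]
    rintro _ ⟨i, rfl⟩
    exact ⟨Ideal.Quotient.mk _ (X ^ i), by rw [hφ_mk, map_pow, aeval_X]⟩
  have : Module.Finite K (Q n) := (monic_X_pow n).finite_adjoinRoot
  let φ' := LinearEquiv.ofBijective φ ⟨LinearMap.injective_iff_surjective.mpr hφ_surj, hφ_surj⟩
  refine ⟨φ'.symm, fun w => ?_⟩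
  obtain ⟨u, rfl⟩ := φ'.surjective w
  rw [LinearEquiv.symm_apply_apply]
  exact φ'.symm_apply_eq.mpr (hφ_mul_X u).symm

noncomputable def twistedDiffQuot (b : K) (n : ℕ) : (Q n) →ₗ[K] (Q n) :=
  Ideal.Quotient.liftLinear _ ((Ideal.Quotient.mkₐ K _).toLinearMap ∘ₗ twistedDiff b)
    fun _ hf => Ideal.Quotient.eq_zero_iff_mem.mpr <|
      Ideal.span_singleton_le_span_singleton.mpr (pow_dvd_pow X n.le_succ)
        (twistedDiff_mem_span_X_pow_succ b hf)

theorem twistedDiffQuot_mk (b : K) (n : ℕ) (f : K[X]) :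
    twistedDiffQuot b n (Ideal.Quotient.mk _ f) = Ideal.Quotient.mk _ (twistedDiff b f) :=
  Ideal.Quotient.liftLinear_mk _ _ _ f

theorem twistedDiffQuot_pow_mk (b : K) (n k : ℕ) (f : K[X]) :
    (twistedDiffQuot b n ^ k) (Ideal.Quotient.mk _ f) =
      Ideal.Quotient.mk _ ((twistedDiff b ^ k) f) := by
  induction k generalizing f with
  | zero => rfl
  | succ k ih =>
    rw [pow_succ (twistedDiffQuot b n), pow_succ (twistedDiff b), Module.End.mul_apply,
      Module.End.mul_apply, twistedDiffQuot_mk, ih]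

theorem twistedDiffQuot_pow_eq_zero (b : K) {n k : ℕ} (hnk : n ≤ k) :
    twistedDiffQuot b n ^ k = 0 := by
  refine LinearMap.ext fun v => ?_
  obtain ⟨f, rfl⟩ := Ideal.Quotient.mk_surjective v
  rw [twistedDiffQuot_pow_mk, LinearMap.zero_apply, Ideal.Quotient.eq_zero_iff_mem]
  exact Ideal.span_singleton_le_span_singleton.mpr (pow_dvd_pow X hnk)
    (twistedDiff_pow_apply_mem_span_X_pow b k f)

theorem span_range_twistedDiffQuot_pow_one (b : K) (n : ℕ)
    (hb : ∀ i < n, (ascPochhammer K i).eval b ≠ 0) :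
    Submodule.span K (Set.range fun i : ℕ =>
      (twistedDiffQuot b n ^ i) (Ideal.Quotient.mk _ 1)) = ⊤ := by
  rw [eq_top_iff, ← span_range_mk_X_pow, Submodule.span_le]
  rintro _ ⟨i, rfl⟩
  by_cases hi : i < n
  · have hgen : Ideal.Quotient.mk _ (X ^ i) =
        ((ascPochhammer K i).eval b)⁻¹ • (twistedDiffQuot b n ^ i) (Ideal.Quotient.mk _ 1) := by
      rw [twistedDiffQuot_pow_mk, twistedDiff_pow_apply_one, ← Ideal.Quotient.mkₐ_eq_mk K,
        map_smul, smul_smul, inv_mul_cancel₀ (hb i hi), one_smul]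
    simp only [SetLike.mem_coe]
    rw [hgen]
    exact Submodule.smul_mem _ _ (Submodule.subset_span ⟨i, rfl⟩)
  · have hzero : Ideal.Quotient.mk (Ideal.span {(X : K[X]) ^ n}) (X ^ i) = 0 :=
      Ideal.Quotient.eq_zero_iff_mem.mpr
        (Ideal.mem_span_singleton.mpr (pow_dvd_pow X (not_lt.mp hi)))
    simp only [SetLike.mem_coe]
    rw [hzero]
    exact Submodule.zero_mem _

end QuotientByXPow

end Polynomial

theorem slash_homology_one_variable_general (p : ℕ)
    (K : Type*) [Field K] [CharP K p] (b : ℤ) (hb1 : 2 ≤ b)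
    (D : Polynomial K → Polynomial K)
    (hD : ∀ f, D f = Polynomial.X ^ 2 * Polynomial.derivative f
      + Polynomial.C ((b : K)) * (Polynomial.X * f)) :
    ∃ Dbar : (Polynomial K ⧸ Ideal.span {(Polynomial.X : Polynomial K) ^ ((p : ℤ) + 1 - b).toNat}) →ₗ[K]
        (Polynomial K ⧸ Ideal.span {(Polynomial.X : Polynomial K) ^ ((p : ℤ) + 1 - b).toNat}),
      (∀ f : Polynomial K,
          Dbar (Ideal.Quotient.mk _ f) = Ideal.Quotient.mk _ (D f)) ∧
      Dbar ^ p = 0 ∧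
      Submodule.span K (Set.range fun i : ℕ =>
          (Dbar ^ i) (Ideal.Quotient.mk _ (1 : Polynomial K))) = ⊤ ∧
      ∃ e : (Polynomial K ⧸ Ideal.span {(Polynomial.X : Polynomial K) ^ ((p : ℤ) + 1 - b).toNat}) ≃ₗ[K]
          (Polynomial K ⧸ Ideal.span {(Polynomial.X : Polynomial K) ^ ((p : ℤ) + 1 - b).toNat}),
        ∀ v, e (Dbar v) = Ideal.Quotient.mk _ Polynomial.X * e v := by
  obtain rfl : D = twistedDiff (b : K) := funext fun f => (hD f).trans (twistedDiff_apply _ f).symm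
  set n := ((p : ℤ) + 1 - b).toNat
  have hcyclic := span_range_twistedDiffQuot_pow_one (b : K) n fun i hi =>
    ascPochhammer_eval_intCast_ne_zero p (by omega) (by omega)
  have hnil : twistedDiffQuot (b : K) n ^ n = 0 := twistedDiffQuot_pow_eq_zero _ le_rfl
  refine ⟨twistedDiffQuot (b : K) n, twistedDiffQuot_mk _ n,
    twistedDiffQuot_pow_eq_zero _ (by omega), hcyclic,
    exists_linearEquiv_mul_X_of_cyclic _ _ (by rw [hnil, LinearMap.zero_apply]) hcyclic⟩

/-- For `2 ≤ b ≤ p`, the twisted `p`-differential `∂_b` descends to `K[x]/(x^{p+1−b})`;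
the quotient is a cyclic `H_q = K[∂]/(∂^p)`-module generated by the image of `1`, and is
isomorphic to `K[∂]/(∂^{p+1−b})` (the balanced module `V_{p−b}`). -/
theorem slash_homology_one_variable (p : ℕ) (hp : Nat.Prime p) (hodd : Odd p)
    (K : Type*) [Field K] [CharP K p] (b : ℤ) (hb1 : 2 ≤ b) (hb2 : b ≤ (p : ℤ))
    (D : Polynomial K → Polynomial K)
    (hD : ∀ f, D f = Polynomial.X ^ 2 * Polynomial.derivative f
      + Polynomial.C ((b : K)) * (Polynomial.X * f)) :
    ∃ Dbar : (Polynomial K ⧸ Ideal.span {(Polynomial.X : Polynomial K) ^ ((p : ℤ) + 1 - b).toNat}) →ₗ[K]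
        (Polynomial K ⧸ Ideal.span {(Polynomial.X : Polynomial K) ^ ((p : ℤ) + 1 - b).toNat}),
      (∀ f : Polynomial K,
          Dbar (Ideal.Quotient.mk _ f) = Ideal.Quotient.mk _ (D f)) ∧
      Dbar ^ p = 0 ∧
      Submodule.span K (Set.range fun i : ℕ =>
          (Dbar ^ i) (Ideal.Quotient.mk _ (1 : Polynomial K))) = ⊤ ∧
      ∃ e : (Polynomial K ⧸ Ideal.span {(Polynomial.X : Polynomial K) ^ ((p : ℤ) + 1 - b).toNat}) ≃ₗ[K]
          (Polynomial K ⧸ Ideal.span {(Polynomial.X : Polynomial K) ^ ((p : ℤ) + 1 - b).toNat}),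
        ∀ v, e (Dbar v) = Ideal.Quotient.mk _ Polynomial.X * e v :=
  slash_homology_one_variable_general p K b hb1 D hD
end

section
/- Let 𝔞 be the ideal of K[x₁,x₂,y₁,y₂] generated by x₁+x₂−y₁−y₂ and x₁x₂−y₁y₂, and let D be the K-derivation with D(x_i) = x_i² and D(y_i) = y_i². Then for both e = (y₂−y₁) + (x₂−x₁) and e′ = (y₂−y₁) − (x₂−x₁) one has D(e) − (y₁+y₂)·e ∈ 𝔞 and D(e′) − (y₁+y₂)·e′ ∈ 𝔞. (This expresses that the maps p_{2i+1} = 1⊗(x₂−x₁) + (x₂−x₁)⊗1 and p_{2i} = 1⊗(x₂−x₁) − (x₂−x₁)⊗1 appearing in the minimal complex for T^{⊗n} are H_q-equivariant maps of twisted bimodules q^{2j}B^{je₁} → q^{2(j−1)}B^{(j−1)e₁}.) -/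
open MvPolynomial

/-- With `x₁ = X 0, x₂ = X 1, y₁ = X 2, y₂ = X 3` and `𝔞 = (x₁+x₂−y₁−y₂, x₁x₂−y₁y₂)`,
for both `e = (y₂−y₁) + (x₂−x₁)` and `e′ = (y₂−y₁) − (x₂−x₁)` one has
`D(e) − (y₁+y₂)·e ∈ 𝔞` and `D(e′) − (y₁+y₂)·e′ ∈ 𝔞`, i.e. the maps `p_{2i+1}` and
`p_{2i}` are `H_q`-equivariant. -/
theorem p_maps_are_Hq_equivariant (p : ℕ) (hp : Nat.Prime p) (hodd : Odd p)
    (K : Type*) [Field K] [CharP K p]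
    (D : Derivation K (MvPolynomial (Fin 4) K) (MvPolynomial (Fin 4) K))
    (hD : ∀ i, D (X i) = X i ^ 2) :
    (D ((X 3 - X 2) + (X 1 - X 0)) - ((X 3 - X 2) + (X 1 - X 0)) * (X 2 + X 3) ∈
      Ideal.span {X 0 + X 1 - X 2 - X 3, X 0 * X 1 - X 2 * X 3}) ∧
    (D ((X 3 - X 2) - (X 1 - X 0)) - ((X 3 - X 2) - (X 1 - X 0)) * (X 2 + X 3) ∈
      Ideal.span {X 0 + X 1 - X 2 - X 3, X 0 * X 1 - X 2 * X 3}) := by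
  have hg : (X 0 + X 1 - X 2 - X 3 : MvPolynomial (Fin 4) K) ∈
      Ideal.span {X 0 + X 1 - X 2 - X 3, X 0 * X 1 - X 2 * X 3} :=
    Ideal.subset_span (Set.mem_insert _ _)
  constructor
  · have : D ((X 3 - X 2) + (X 1 - X 0)) - ((X 3 - X 2) + (X 1 - X 0)) * (X 2 + X 3)
        = (X 1 - X 0) * (X 0 + X 1 - X 2 - X 3) := by
      simp only [map_add, map_sub, hD]; ring
    rw [this]
    exact Ideal.mul_mem_left _ _ hg
  · have : D ((X 3 - X 2) - (X 1 - X 0)) - ((X 3 - X 2) - (X 1 - X 0)) * (X 2 + X 3)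
        = -(X 1 - X 0) * (X 0 + X 1 - X 2 - X 3) := by
      simp only [map_add, map_sub, hD]; ring
    rw [this]
    exact Ideal.mul_mem_left _ _ hg
end

section
/- Let k ≥ 1 and let M be the K-vector space with basis e₀, e₁, …, e_{kp+1}, equipped with the K-linear endomorphism ∂ defined by ∂(e_j) = (kp+2+j)·e_{j+1} for j < kp+1 and ∂(e_{kp+1}) = 0 (coefficients taken in K). Then ∂^p = 0, and as a module over H_q = K[∂]/(∂^p) there is an isomorphism M ≅ K[∂]/(∂^{p−1}) ⊕ (K[∂]/(∂^p))^{⊕(k−1)} ⊕ K[∂]/(∂³). For k = 0, the corresponding two-dimensional module with ∂(e₀) = 2e₁, ∂(e₁) = 0 is isomorphic to K[∂]/(∂²). (Up to grading shifts, this is the computation showing that the total p-complex of pHH^{∂_q}(br) is quasi-isomorphic to q^{3p+2}V_{p−2} ⊕ q^{4kp+4}V₂ for k > 0, and to q⁵V₁ for k = 0.) -/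
set_option maxHeartbeats 1000000

open Polynomial

namespace TotalAux

def wf (K : Type*) [Field K] (k p : ℕ) : ℕ → K := fun j => ((k*p+2+j : ℕ) : K)


variable (K : Type*) [Field K]

open scoped Classical in
noncomputable def segC (w : ℕ → K) : ℕ → K
  | 0 => 1
  | j+1 => if w j = 0 then 1 else segC w j * (w j)⁻¹

open scoped Classical in
lemma segC_ne_zero (w : ℕ → K) : ∀ j, segC K w j ≠ 0
  | 0 => one_ne_zero
  | j+1 => by
    rw [segC]
    split
    · exact one_ne_zero
    · exact mul_ne_zero (segC_ne_zero w j) (inv_ne_zero (by assumption))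

open scoped Classical in
lemma segC_rel (w : ℕ → K) (j : ℕ) (h : w j ≠ 0) :
    w j * segC K w (j+1) = segC K w j := by
  rw [segC, if_neg h]
  field_simp

lemma mk_smul (m : ℕ) (a : K) (q : Polynomial K) :
    Ideal.Quotient.mk (Ideal.span {(X : Polynomial K) ^ m}) (a • q)
      = a • Ideal.Quotient.mk (Ideal.span {(X : Polynomial K) ^ m}) q := by
  rw [← Ideal.Quotient.mkₐ_eq_mk K, map_smul]

lemma mk_monomial_eq_zero (m n : ℕ) (a : K) (hn : m ≤ n) :
    Ideal.Quotient.mk (Ideal.span {(X : Polynomial K) ^ m}) (monomial n a) = 0 := by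
  rw [Ideal.Quotient.eq_zero_iff_mem, Ideal.mem_span_singleton, X_pow_dvd_iff]
  intro d hd
  rw [coeff_monomial, if_neg (by omega)]

noncomputable def segMap (N m : ℕ) (c : ℕ → K) (start : ℕ) (h : start + m ≤ N) :
    (Fin N → K) →ₗ[K] Polynomial K ⧸ Ideal.span {(X : Polynomial K) ^ m} :=
  (Ideal.Quotient.mkₐ K (Ideal.span {(X : Polynomial K) ^ m})).toLinearMap.comp
    (∑ t : Fin m, c (start + (t : ℕ)) •
      ((monomial (t : ℕ) : K →ₗ[K] Polynomial K).comp
        (LinearMap.proj (⟨start + (t : ℕ), by have := t.isLt; omega⟩ : Fin N))))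

lemma segMap_apply (N m : ℕ) (c : ℕ → K) (start : ℕ) (h : start + m ≤ N) (v : Fin N → K) :
    segMap K N m c start h v = Ideal.Quotient.mk _
      (∑ t : Fin m, monomial (t : ℕ) (c (start + (t : ℕ)) *
        v (⟨start + (t : ℕ), by have := t.isLt; omega⟩ : Fin N))) := by
  simp [segMap, smul_monomial]

lemma segMap_single (N m : ℕ) (c : ℕ → K) (start : ℕ) (h : start + m ≤ N)
    (t0 : ℕ) (ht0 : t0 < m) (j : Fin N) (hj : (j : ℕ) = start + t0) :
    segMap K N m c start h (Pi.single j 1) =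
      Ideal.Quotient.mk _ (monomial t0 (c (j : ℕ))) := by
  rw [segMap_apply]
  congr 1
  rw [Finset.sum_eq_single (⟨t0, ht0⟩ : Fin m)]
  · have hidx : (⟨start + ((⟨t0, ht0⟩ : Fin m) : ℕ), by omega⟩ : Fin N) = j :=
      Fin.ext (by simp [hj])
    rw [hidx, Pi.single_eq_same, mul_one, hj]
  · intro b _ hb
    have hne : (⟨start + (b : ℕ), by have := b.isLt; omega⟩ : Fin N) ≠ j := by
      intro hc
      apply hb
      apply Fin.ext
      have := congrArg Fin.val hc
      simp only [hj] at this
      simpa using by omega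
    rw [Pi.single_eq_of_ne hne, mul_zero, map_zero]
  · simp

lemma segMap_single_zero (N m : ℕ) (c : ℕ → K) (start : ℕ) (h : start + m ≤ N)
    (j : Fin N) (hj : (j : ℕ) < start ∨ start + m ≤ (j : ℕ)) :
    segMap K N m c start h (Pi.single j 1) = 0 := by
  rw [segMap_apply]
  convert map_zero (Ideal.Quotient.mk (Ideal.span {(X : Polynomial K) ^ m}))
  apply Finset.sum_eq_zero
  intro b _
  have hne : (⟨start + (b : ℕ), by have := b.isLt; omega⟩ : Fin N) ≠ j := by
    intro hc
    have := congrArg Fin.val hc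
    simp only [] at this
    have hb := b.isLt
    omega
  rw [Pi.single_eq_of_ne hne, mul_zero, map_zero]

lemma segMap_eq_zero (N m : ℕ) (c : ℕ → K) (start : ℕ) (h : start + m ≤ N)
    (v : Fin N → K) (hv : segMap K N m c start h v = 0)
    (j : Fin N) (h1 : start ≤ (j : ℕ)) (h2 : (j : ℕ) < start + m) (hc : c (j : ℕ) ≠ 0) :
    v j = 0 := by
  rw [segMap_apply, Ideal.Quotient.eq_zero_iff_mem, Ideal.mem_span_singleton,
    X_pow_dvd_iff] at hv
  have hco := hv ((j : ℕ) - start) (by omega)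
  rw [finset_sum_coeff] at hco
  rw [Finset.sum_eq_single (⟨(j : ℕ) - start, by omega⟩ : Fin m)] at hco
  · rw [coeff_monomial, if_pos rfl] at hco
    have hidx : (⟨start + ((⟨(j:ℕ) - start, by omega⟩ : Fin m) : ℕ), by omega⟩ : Fin N) = j :=
      Fin.ext (by simp; omega)
    rw [hidx] at hco
    rcases mul_eq_zero.mp hco with h' | h'
    · exact absurd h' (by
        have : start + ((⟨(j:ℕ) - start, by omega⟩ : Fin m) : ℕ) = (j : ℕ) := by simp; omega
        rw [this]; exact hc)
    · exact h'
  · intro b _ hb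
    rw [coeff_monomial, if_neg (by
      intro hcc
      apply hb
      apply Fin.ext
      simpa using hcc)]
  · simp

lemma segMap_surjective_trunc (m : ℕ) :
    Function.Surjective (segMap K m m (fun _ => 1) 0 (by omega)) := by
  intro x
  obtain ⟨q, rfl⟩ := Ideal.Quotient.mk_surjective x
  refine ⟨fun s => q.coeff s, ?_⟩
  rw [segMap_apply, Ideal.Quotient.eq, Ideal.mem_span_singleton, X_pow_dvd_iff]
  intro d hd
  rw [coeff_sub, finset_sum_coeff, Finset.sum_eq_single (⟨d, hd⟩ : Fin m)]
  · simp [coeff_monomial]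
  · intro b _ hb
    rw [coeff_monomial, if_neg (by
      intro hcc; apply hb; apply Fin.ext; simpa using hcc)]
  · simp

noncomputable def truncEquiv (m : ℕ) :
    (Fin m → K) ≃ₗ[K] Polynomial K ⧸ Ideal.span {(X : Polynomial K) ^ m} :=
  LinearEquiv.ofBijective (segMap K m m (fun _ => 1) 0 (by omega))
    ⟨by
      intro v1 v2 h12
      funext j
      have h0 : segMap K m m (fun _ => 1) 0 (by omega) (v1 - v2) = 0 := by
        rw [map_sub, h12, sub_self]
      have := segMap_eq_zero K m m (fun _ => 1) 0 (by omega) (v1 - v2) h0 j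
        (by omega) (by have := j.isLt; omega) one_ne_zero
      have h' : v1 j - v2 j = 0 := this
      exact sub_eq_zero.mp h',
      segMap_surjective_trunc K m⟩

lemma finiteDimensional_quot (m : ℕ) :
    FiniteDimensional K (Polynomial K ⧸ Ideal.span {(X : Polynomial K) ^ m}) :=
  Module.Finite.equiv (truncEquiv K m)

lemma finrank_quot (m : ℕ) :
    Module.finrank K (Polynomial K ⧸ Ideal.span {(X : Polynomial K) ^ m}) = m := by
  rw [← (truncEquiv K m).finrank_eq]
  simp [Module.finrank_pi]


lemma segMap_single' (N m : ℕ) (c : ℕ → K) (start : ℕ) (h : start + m ≤ N)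
    (t0 : ℕ) (ht0 : t0 < m) (a : ℕ) (ha : a < N) (hj : a = start + t0) :
    segMap K N m c start h (Pi.single (⟨a, ha⟩ : Fin N) 1) =
      Ideal.Quotient.mk _ (monomial t0 (c a)) :=
  segMap_single K N m c start h t0 ht0 ⟨a, ha⟩ hj

lemma segMap_single_zero' (N m : ℕ) (c : ℕ → K) (start : ℕ) (h : start + m ≤ N)
    (a : ℕ) (ha : a < N) (hj : a < start ∨ start + m ≤ a) :
    segMap K N m c start h (Pi.single (⟨a, ha⟩ : Fin N) 1) = 0 :=
  segMap_single_zero K N m c start h ⟨a, ha⟩ hj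

lemma segMap_eq_zero' (N m : ℕ) (c : ℕ → K) (start : ℕ) (h : start + m ≤ N)
    (v : Fin N → K) (hv : segMap K N m c start h v = 0)
    (a : ℕ) (ha : a < N) (h1 : start ≤ a) (h2 : a < start + m) (hc : c a ≠ 0) :
    v ⟨a, ha⟩ = 0 :=
  segMap_eq_zero K N m c start h v hv ⟨a, ha⟩ h1 h2 hc

end TotalAux


section Main

open TotalAux

/-- The `(kp+2)`-dimensional `p`-complex with `∂(e_j) = (kp+2+j)·e_{j+1}` and
`∂(e_{kp+1}) = 0` satisfies `∂^p = 0`; for `k ≥ 1` it decomposes as an `H_q`-module as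
`K[∂]/(∂^{p−1}) ⊕ (K[∂]/(∂^p))^{⊕(k−1)} ⊕ K[∂]/(∂³)`, while for `k = 0` it is
isomorphic to `K[∂]/(∂²)`. -/
theorem total_complex_of_pHH_br (p : ℕ) (hp : Nat.Prime p) (hodd : Odd p)
    (K : Type*) [Field K] [CharP K p] (k : ℕ)
    (D : (Fin (k * p + 2) → K) →ₗ[K] (Fin (k * p + 2) → K))
    (hD : ∀ j : Fin (k * p + 2), D (Pi.single j 1) =
      if h : (j : ℕ) + 1 < k * p + 2
      then (((k * p + 2 + (j : ℕ) : ℕ) : K)) •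
        (Pi.single (⟨(j : ℕ) + 1, h⟩ : Fin (k * p + 2)) 1 : Fin (k * p + 2) → K)
      else 0) :
    D ^ p = 0 ∧
    (1 ≤ k →
      ∃ e : (Fin (k * p + 2) → K) ≃ₗ[K]
          ((Polynomial K ⧸ Ideal.span {(Polynomial.X : Polynomial K) ^ (p - 1)}) ×
           (Fin (k - 1) → Polynomial K ⧸ Ideal.span {(Polynomial.X : Polynomial K) ^ p}) ×
           (Polynomial K ⧸ Ideal.span {(Polynomial.X : Polynomial K) ^ 3})),
        ∀ v, e (D v) =
          (Ideal.Quotient.mk _ Polynomial.X * (e v).1,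
           fun i => Ideal.Quotient.mk _ Polynomial.X * (e v).2.1 i,
           Ideal.Quotient.mk _ Polynomial.X * (e v).2.2)) ∧
    (k = 0 →
      ∃ e : (Fin (k * p + 2) → K) ≃ₗ[K]
          (Polynomial K ⧸ Ideal.span {(Polynomial.X : Polynomial K) ^ 2}),
        ∀ v, e (D v) = Ideal.Quotient.mk _ Polynomial.X * e v) := by
  have hp2 : 2 < p := by
    have h2 := hp.two_le
    rw [Nat.odd_iff] at hodd
    omega
  have hwz : ∀ j : ℕ, wf K k p j = 0 ↔ p ∣ (j+2) := by
    intro j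
    show ((k*p+2+j : ℕ) : K) = 0 ↔ _
    rw [CharP.cast_eq_zero_iff K p]
    have e : k*p+2+j = k*p + (j+2) := by ring
    rw [e, Nat.dvd_add_right (dvd_mul_left p k)]
  have hDn : ∀ (a : ℕ) (ha : a < k*p+2), D (Pi.single (⟨a, ha⟩ : Fin (k*p+2)) 1) =
      if h : a + 1 < k*p+2 then wf K k p a • (Pi.single (⟨a+1, h⟩ : Fin (k*p+2)) 1 : Fin (k*p+2) → K)
      else 0 := fun a ha => hD ⟨a, ha⟩
  -- part 1
  have key2 : ∀ (m a : ℕ) (ha : a < k*p+2), k*p+2 ≤ a + m →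
      (D ^ m) (Pi.single (⟨a, ha⟩ : Fin (k*p+2)) 1) = 0 := by
    intro m
    induction m with
    | zero => intro a ha h; omega
    | succ m ih =>
      intro a ha h
      rw [pow_succ, Module.End.mul_apply, hDn a ha]
      split
      · next h1 =>
        rw [map_smul, ih (a+1) h1 (by omega), smul_zero]
      · rw [map_zero]
  have key1 : ∀ (m a : ℕ) (ha : a < k*p+2) (h : a + m < k*p+2),
      (D ^ m) (Pi.single (⟨a, ha⟩ : Fin (k*p+2)) 1) =
        (∏ i ∈ Finset.range m, wf K k p (a+i)) •
          (Pi.single (⟨a+m, h⟩ : Fin (k*p+2)) 1 : Fin (k*p+2) → K) := by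
    intro m
    induction m with
    | zero =>
      intro a ha h
      have hjj : (⟨a+0, h⟩ : Fin (k*p+2)) = ⟨a, ha⟩ := Fin.ext (by show a+0 = a; omega)
      rw [pow_zero, Module.End.one_apply, Finset.range_zero, Finset.prod_empty, one_smul, hjj]
    | succ m ih =>
      intro a ha h
      have h1 : a + 1 < k*p+2 := by omega
      have hX : a + 1 + m < k*p+2 := by omega
      rw [pow_succ, Module.End.mul_apply, hDn a ha, dif_pos h1, map_smul,
        ih (a+1) h1 hX, smul_smul]
      have hprod : wf K k p a * ∏ i ∈ Finset.range m, wf K k p (a+1+i) =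
          ∏ i ∈ Finset.range (m+1), wf K k p (a+i) := by
        rw [Finset.prod_range_succ']
        have h0 : a + 0 = a := by omega
        rw [h0, mul_comm]
        congr 1
        apply Finset.prod_congr rfl
        intro i _
        have hii : a + (i+1) = a + 1 + i := by omega
        rw [hii]
      have hfin : (⟨a+1+m, hX⟩ : Fin (k*p+2)) = ⟨a+(m+1), h⟩ := Fin.ext (by show a+1+m = a+(m+1); omega)
      rw [hprod, hfin]
  have part1 : D ^ p = 0 := by
    have hb : ∀ (a : ℕ) (ha : a < k*p+2),
        (D ^ p) (Pi.single (⟨a, ha⟩ : Fin (k*p+2)) 1) = 0 := by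
      intro a ha
      by_cases h : a + p < k*p+2
      · rw [key1 p a ha h]
        obtain ⟨i, hip, hdvd⟩ : ∃ i, i < p ∧ p ∣ (a + i + 2) := by
          rcases Nat.eq_zero_or_pos ((a+2) % p) with h0 | h0
          · refine ⟨0, by omega, ?_⟩
            have he : a + 0 + 2 = a + 2 := by omega
            rw [he]
            exact Nat.dvd_of_mod_eq_zero h0
          · have hlt : (a+2) % p < p := Nat.mod_lt _ (by omega)
            have hdm := Nat.div_add_mod (a+2) p
            refine ⟨p - (a+2) % p, by omega, ?_⟩
            have he : a + (p - (a+2) % p) + 2 = p * ((a+2)/p + 1) := by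
              rw [Nat.mul_add, Nat.mul_one]
              omega
            rw [he]
            exact Dvd.intro _ rfl
        have hz : wf K k p (a + i) = 0 := (hwz _).2 hdvd
        rw [Finset.prod_eq_zero (Finset.mem_range.2 hip) hz, zero_smul]
      · exact key2 p a ha (by omega)
    apply LinearMap.ext
    intro v
    have hv : v = ∑ j : Fin (k*p+2), Pi.single j (v j) := (Finset.univ_sum_single v).symm
    rw [LinearMap.zero_apply, hv, map_sum]
    apply Finset.sum_eq_zero
    intro j _
    have hsm : Pi.single j (v j) = v j • (Pi.single j 1 : Fin (k*p+2) → K) := by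
      rw [← Pi.single_smul, smul_eq_mul, mul_one]
    rw [hsm, map_smul]
    rcases j with ⟨a, ha⟩
    rw [hb a ha, smul_zero]
  refine ⟨part1, ?_, ?_⟩
  · intro hk
    classical
    have hple : p ≤ k*p := Nat.le_mul_of_pos_left p (by omega)
    have hsub : (k-1)*p + p = k*p := by
      rw [Nat.sub_one_mul]
      omega
    set c : ℕ → K := TotalAux.segC K (wf K k p) with hcdef
    have hcne : ∀ j, c j ≠ 0 := TotalAux.segC_ne_zero K _
    have hrel : ∀ j, wf K k p j ≠ 0 → wf K k p j * c (j+1) = c j := TotalAux.segC_rel K _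
    have hA : 0 + (p-1) ≤ k*p+2 := by omega
    have hBb : ∀ i : Fin (k-1), ((i:ℕ)+1)*p - 1 + p ≤ k*p+2 := by
      intro i
      have h1 : ((i:ℕ)+1)*p ≤ (k-1)*p := mul_le_mul_left (by have := i.isLt; omega) p
      omega
    have hCb : k*p-1 + 3 ≤ k*p+2 := by omega
    have hdecomp : ∀ a : ℕ, p-1 ≤ a → a < k*p-1 →
        ∃ i0 t0, i0 < k-1 ∧ t0 < p ∧ a = (i0+1)*p-1+t0 := by
      intro a h1 h2
      have hppos : 0 < p := by omega
      have hdm := Nat.div_add_mod (a+1) p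
      have hge : 1 ≤ (a+1)/p := (Nat.one_le_div_iff hppos).2 (by omega)
      have hlt2 : (a+1)/p < k := (Nat.div_lt_iff_lt_mul hppos).2 (by omega)
      have hmod : (a+1) % p < p := Nat.mod_lt _ hppos
      refine ⟨(a+1)/p - 1, (a+1) % p, by omega, hmod, ?_⟩
      have e4 : (a+1)/p - 1 + 1 = (a+1)/p := by omega
      rw [e4, Nat.mul_comm]
      omega
    set F : (Fin (k*p+2) → K) →ₗ[K]
        ((Polynomial K ⧸ Ideal.span {(X : Polynomial K) ^ (p-1)}) ×
         (Fin (k-1) → Polynomial K ⧸ Ideal.span {(X : Polynomial K) ^ p}) ×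
         (Polynomial K ⧸ Ideal.span {(X : Polynomial K) ^ 3})) :=
      (TotalAux.segMap K (k*p+2) (p-1) c 0 hA).prod
        ((LinearMap.pi fun i : Fin (k-1) =>
            TotalAux.segMap K (k*p+2) p c (((i:ℕ)+1)*p-1) (hBb i)).prod
          (TotalAux.segMap K (k*p+2) 3 c (k*p-1) hCb)) with hFdef
    have hFA : ∀ (a : ℕ) (ha : a < k*p+2), a < p - 1 →
        F (Pi.single (⟨a, ha⟩ : Fin (k*p+2)) 1) =
          (Ideal.Quotient.mk _ (monomial a (c a)), 0, 0) := by
      intro a ha hap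
      refine Prod.ext ?_ (Prod.ext ?_ ?_)
      · exact TotalAux.segMap_single' K _ _ c 0 hA a hap a ha (by omega)
      · funext i
        have hp1 : p ≤ ((i:ℕ)+1)*p := Nat.le_mul_of_pos_left p (by omega)
        exact TotalAux.segMap_single_zero' K _ _ c _ (hBb i) a ha (Or.inl (by omega))
      · exact TotalAux.segMap_single_zero' K _ _ c _ hCb a ha (Or.inl (by omega))
    have hFB : ∀ (i0 : ℕ) (hi0 : i0 < k-1) (t0 : ℕ), t0 < p → ∀ (a : ℕ) (ha : a < k*p+2),
        a = (i0+1)*p - 1 + t0 →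
        F (Pi.single (⟨a, ha⟩ : Fin (k*p+2)) 1) =
          (0, Pi.single (⟨i0, hi0⟩ : Fin (k-1)) (Ideal.Quotient.mk _ (monomial t0 (c a))), 0) := by
      intro i0 hi0 t0 ht0 a ha haeq
      have hp1 : p ≤ (i0+1)*p := Nat.le_mul_of_pos_left p (by omega)
      have hi2 : (i0+2)*p ≤ k*p := mul_le_mul_left (by omega) p
      have hadd : (i0+1)*p + p = (i0+2)*p := by ring
      have hpos : 0 < (i0+1)*p := Nat.mul_pos (by omega) (by omega)
      refine Prod.ext ?_ (Prod.ext ?_ ?_)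
      · exact TotalAux.segMap_single_zero' K _ _ c 0 hA a ha (Or.inr (by omega))
      · funext i
        show TotalAux.segMap K (k*p+2) p c (((i:ℕ)+1)*p-1) (hBb i)
            (Pi.single (⟨a, ha⟩ : Fin (k*p+2)) 1)
          = (Pi.single (⟨i0, hi0⟩ : Fin (k-1))
              (Ideal.Quotient.mk (Ideal.span {(X : Polynomial K)^p}) (monomial t0 (c a)))
              : Fin (k-1) → Polynomial K ⧸ Ideal.span {(X : Polynomial K)^p}) i
        by_cases hii : i = (⟨i0, hi0⟩ : Fin (k-1))
        · rw [hii, Pi.single_eq_same]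
          exact TotalAux.segMap_single' K _ _ c _ (hBb ⟨i0, hi0⟩) t0 ht0 a ha
            (by show a = (i0+1)*p-1+t0; omega)
        · rw [Pi.single_eq_of_ne hii]
          have hvne : (i:ℕ) ≠ i0 := fun hv => hii (Fin.ext hv)
          rcases Nat.lt_or_ge (i:ℕ) i0 with hlt | hge
          · have e1 : ((i:ℕ)+1)*p + p = ((i:ℕ)+2)*p := by ring
            have e2 : ((i:ℕ)+2)*p ≤ (i0+1)*p := mul_le_mul_left (by omega) p
            have e3 : 0 < ((i:ℕ)+1)*p := Nat.mul_pos (by omega) (by omega)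
            exact TotalAux.segMap_single_zero' K _ _ c _ (hBb i) a ha (Or.inr (by omega))
          · have e1 : (i0+1)*p + p = (i0+2)*p := by ring
            have e2 : (i0+2)*p ≤ ((i:ℕ)+1)*p := mul_le_mul_left (by omega) p
            exact TotalAux.segMap_single_zero' K _ _ c _ (hBb i) a ha (Or.inl (by omega))
      · exact TotalAux.segMap_single_zero' K _ _ c _ hCb a ha (Or.inl (by omega))
    have hFC : ∀ (t0 : ℕ), t0 < 3 → ∀ (a : ℕ) (ha : a < k*p+2), a = k*p-1+t0 →
        F (Pi.single (⟨a, ha⟩ : Fin (k*p+2)) 1) =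
          (0, 0, Ideal.Quotient.mk _ (monomial t0 (c a))) := by
      intro t0 ht0 a ha haeq
      refine Prod.ext ?_ (Prod.ext ?_ ?_)
      · exact TotalAux.segMap_single_zero' K _ _ c 0 hA a ha (Or.inr (by omega))
      · funext i
        have hi := i.isLt
        have e1 : ((i:ℕ)+1)*p + p = ((i:ℕ)+2)*p := by ring
        have e2 : ((i:ℕ)+2)*p ≤ k*p := mul_le_mul_left (by omega) p
        have e3 : 0 < ((i:ℕ)+1)*p := Nat.mul_pos (by omega) (by omega)
        exact TotalAux.segMap_single_zero' K _ _ c _ (hBb i) a ha (Or.inr (by omega))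
      · exact TotalAux.segMap_single' K _ _ c _ hCb t0 ht0 a ha (by omega)
    have hFinj : Function.Injective F := by
      rw [injective_iff_map_eq_zero]
      intro v hv
      have hA0 : TotalAux.segMap K (k*p+2) (p-1) c 0 hA v = 0 := congrArg Prod.fst hv
      have hB0 : ∀ i : Fin (k-1),
          TotalAux.segMap K (k*p+2) p c (((i:ℕ)+1)*p-1) (hBb i) v = 0 := by
        intro i
        exact congrArg (fun x => x.2.1 i) hv
      have hC0 : TotalAux.segMap K (k*p+2) 3 c (k*p-1) hCb v = 0 :=
        congrArg (fun x => x.2.2) hv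
      funext j
      rcases j with ⟨a, ha⟩
      show v ⟨a, ha⟩ = 0
      by_cases h1 : a < p-1
      · exact TotalAux.segMap_eq_zero' K _ _ c 0 hA v hA0 a ha (by omega) (by omega) (hcne a)
      · by_cases h2 : a < k*p-1
        · obtain ⟨i0, t0, hi0, ht0, haeq⟩ := hdecomp a (by omega) h2
          have hpos : 0 < (i0+1)*p := Nat.mul_pos (by omega) (by omega)
          exact TotalAux.segMap_eq_zero' K _ _ c _ (hBb ⟨i0, hi0⟩) v (hB0 ⟨i0, hi0⟩) a ha
            (by show (i0+1)*p-1 ≤ a; omega) (by show a < (i0+1)*p-1+p; omega) (hcne a)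
        · exact TotalAux.segMap_eq_zero' K _ _ c _ hCb v hC0 a ha (by omega) (by omega) (hcne a)
    haveI : FiniteDimensional K (Polynomial K ⧸ Ideal.span {(X : Polynomial K)^(p-1)}) :=
      TotalAux.finiteDimensional_quot K (p-1)
    haveI : FiniteDimensional K (Polynomial K ⧸ Ideal.span {(X : Polynomial K)^p}) :=
      TotalAux.finiteDimensional_quot K p
    haveI : FiniteDimensional K (Polynomial K ⧸ Ideal.span {(X : Polynomial K)^3}) :=
      TotalAux.finiteDimensional_quot K 3
    have hdim : Module.finrank K (Fin (k*p+2) → K) = Module.finrank K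
        ((Polynomial K ⧸ Ideal.span {(X : Polynomial K) ^ (p-1)}) ×
         (Fin (k-1) → Polynomial K ⧸ Ideal.span {(X : Polynomial K) ^ p}) ×
         (Polynomial K ⧸ Ideal.span {(X : Polynomial K) ^ 3})) := by
      rw [Module.finrank_pi, Module.finrank_prod, Module.finrank_prod,
        Module.finrank_pi_fintype]
      simp only [TotalAux.finrank_quot, Finset.sum_const, Finset.card_univ, Fintype.card_fin,
        smul_eq_mul]
      omega
    set Xmul := (LinearMap.mulLeft K
        (Ideal.Quotient.mk (Ideal.span {(X : Polynomial K)^(p-1)}) X)).prodMap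
      ((LinearMap.pi fun i : Fin (k-1) =>
          (LinearMap.mulLeft K (Ideal.Quotient.mk (Ideal.span {(X : Polynomial K)^p}) X)).comp
            (LinearMap.proj i)).prodMap
        (LinearMap.mulLeft K (Ideal.Quotient.mk (Ideal.span {(X : Polynomial K)^3}) X)))
      with hXdef
    have heq : F ∘ₗ D = Xmul ∘ₗ F := by
      apply Module.Basis.ext (Pi.basisFun K (Fin (k*p+2)))
      intro j
      rcases j with ⟨a, ha⟩
      rw [Pi.basisFun_apply, LinearMap.comp_apply, LinearMap.comp_apply, hDn a ha]
      by_cases hc1 : a < p-1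
      · have hlt : a+1 < k*p+2 := by omega
        rw [dif_pos hlt, map_smul, hFA a ha hc1]
        by_cases hc2 : a < p-2
        · have hwa : wf K k p a ≠ 0 := by
            rw [Ne, hwz]
            intro hdvd
            have := Nat.eq_zero_of_dvd_of_lt hdvd (by omega)
            omega
          rw [hFA (a+1) hlt (by omega)]
          refine Prod.ext ?_ (Prod.ext ?_ ?_)
          · show wf K k p a • Ideal.Quotient.mk _ (monomial (a+1) (c (a+1)))
              = Ideal.Quotient.mk _ X * Ideal.Quotient.mk _ (monomial a (c a))
            rw [← map_mul, X_mul_monomial, ← TotalAux.mk_smul, smul_monomial, smul_eq_mul,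
              hrel a hwa]
          · funext i
            show wf K k p a • (0 : Polynomial K ⧸ Ideal.span {(X : Polynomial K)^p})
              = Ideal.Quotient.mk _ X * 0
            rw [smul_zero, mul_zero]
          · show wf K k p a • (0 : Polynomial K ⧸ Ideal.span {(X : Polynomial K)^3})
              = Ideal.Quotient.mk _ X * 0
            rw [smul_zero, mul_zero]
        · have hw0 : wf K k p a = 0 := by
            rw [hwz]
            have e5 : a+2 = p := by omega
            rw [e5]
          rw [hw0, zero_smul]
          refine Prod.ext ?_ (Prod.ext ?_ ?_)
          · show (0 : Polynomial K ⧸ Ideal.span {(X : Polynomial K)^(p-1)})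
              = Ideal.Quotient.mk _ X * Ideal.Quotient.mk _ (monomial a (c a))
            rw [← map_mul, X_mul_monomial,
              TotalAux.mk_monomial_eq_zero K (p-1) (a+1) (c a) (by omega)]
          · funext i
            show (0 : Polynomial K ⧸ Ideal.span {(X : Polynomial K)^p})
              = Ideal.Quotient.mk _ X * 0
            rw [mul_zero]
          · show (0 : Polynomial K ⧸ Ideal.span {(X : Polynomial K)^3})
              = Ideal.Quotient.mk _ X * 0
            rw [mul_zero]
      · by_cases hc2 : a < k*p-1
        · obtain ⟨i0, t0, hi0, ht0, haeq⟩ := hdecomp a (by omega) hc2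
          have hpos : 0 < (i0+1)*p := Nat.mul_pos (by omega) (by omega)
          have hple2 : p ≤ (i0+1)*p := Nat.le_mul_of_pos_left p (by omega)
          have hi2 : (i0+2)*p ≤ k*p := mul_le_mul_left (by omega) p
          have hadd : (i0+1)*p + p = (i0+2)*p := by ring
          have hlt : a+1 < k*p+2 := by omega
          rw [dif_pos hlt, map_smul, hFB i0 hi0 t0 ht0 a ha haeq]
          by_cases hc3 : t0 < p-1
          · have hwa : wf K k p a ≠ 0 := by
              rw [Ne, hwz]
              intro hdvd
              have e5 : a+2 = (i0+1)*p + (t0+1) := by omega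
              rw [e5, Nat.dvd_add_right (dvd_mul_left p (i0+1))] at hdvd
              have := Nat.eq_zero_of_dvd_of_lt hdvd (by omega)
              omega
            rw [hFB i0 hi0 (t0+1) (by omega) (a+1) hlt (by omega)]
            refine Prod.ext ?_ (Prod.ext ?_ ?_)
            · show wf K k p a • (0 : Polynomial K ⧸ Ideal.span {(X : Polynomial K)^(p-1)})
                = Ideal.Quotient.mk _ X * 0
              rw [smul_zero, mul_zero]
            · funext i
              by_cases hii : i = (⟨i0, hi0⟩ : Fin (k-1))
              · subst hii
                show wf K k p a • ((Pi.single (⟨i0, hi0⟩ : Fin (k-1))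
                      (Ideal.Quotient.mk (Ideal.span {(X : Polynomial K)^p})
                        (monomial (t0+1) (c (a+1))))
                      : Fin (k-1) → Polynomial K ⧸ Ideal.span {(X : Polynomial K)^p}) ⟨i0, hi0⟩)
                  = Ideal.Quotient.mk _ X * ((Pi.single (⟨i0, hi0⟩ : Fin (k-1))
                      (Ideal.Quotient.mk (Ideal.span {(X : Polynomial K)^p})
                        (monomial t0 (c a)))
                      : Fin (k-1) → Polynomial K ⧸ Ideal.span {(X : Polynomial K)^p}) ⟨i0, hi0⟩)
                rw [Pi.single_eq_same, Pi.single_eq_same, ← map_mul, X_mul_monomial,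
                  ← TotalAux.mk_smul, smul_monomial, smul_eq_mul, hrel a hwa]
              · show wf K k p a • ((Pi.single (⟨i0, hi0⟩ : Fin (k-1))
                      (Ideal.Quotient.mk (Ideal.span {(X : Polynomial K)^p})
                        (monomial (t0+1) (c (a+1))))
                      : Fin (k-1) → Polynomial K ⧸ Ideal.span {(X : Polynomial K)^p}) i)
                  = Ideal.Quotient.mk _ X * ((Pi.single (⟨i0, hi0⟩ : Fin (k-1))
                      (Ideal.Quotient.mk (Ideal.span {(X : Polynomial K)^p})
                        (monomial t0 (c a)))
                      : Fin (k-1) → Polynomial K ⧸ Ideal.span {(X : Polynomial K)^p}) i)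
                rw [Pi.single_eq_of_ne hii, Pi.single_eq_of_ne hii, smul_zero, mul_zero]
            · show wf K k p a • (0 : Polynomial K ⧸ Ideal.span {(X : Polynomial K)^3})
                = Ideal.Quotient.mk _ X * 0
              rw [smul_zero, mul_zero]
          · have hw0 : wf K k p a = 0 := by
              rw [hwz]
              have e5 : a+2 = (i0+2)*p := by omega
              rw [e5]
              exact dvd_mul_left p (i0+2)
            rw [hw0, zero_smul]
            refine Prod.ext ?_ (Prod.ext ?_ ?_)
            · show (0 : Polynomial K ⧸ Ideal.span {(X : Polynomial K)^(p-1)})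
                = Ideal.Quotient.mk _ X * 0
              rw [mul_zero]
            · funext i
              by_cases hii : i = (⟨i0, hi0⟩ : Fin (k-1))
              · subst hii
                show (0 : Polynomial K ⧸ Ideal.span {(X : Polynomial K)^p})
                  = Ideal.Quotient.mk _ X * ((Pi.single (⟨i0, hi0⟩ : Fin (k-1))
                      (Ideal.Quotient.mk (Ideal.span {(X : Polynomial K)^p})
                        (monomial t0 (c a)))
                      : Fin (k-1) → Polynomial K ⧸ Ideal.span {(X : Polynomial K)^p}) ⟨i0, hi0⟩)
                rw [Pi.single_eq_same, ← map_mul, X_mul_monomial,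
                  TotalAux.mk_monomial_eq_zero K p (t0+1) (c a) (by omega)]
              · show (0 : Polynomial K ⧸ Ideal.span {(X : Polynomial K)^p})
                  = Ideal.Quotient.mk _ X * ((Pi.single (⟨i0, hi0⟩ : Fin (k-1))
                      (Ideal.Quotient.mk (Ideal.span {(X : Polynomial K)^p})
                        (monomial t0 (c a)))
                      : Fin (k-1) → Polynomial K ⧸ Ideal.span {(X : Polynomial K)^p}) i)
                rw [Pi.single_eq_of_ne hii, mul_zero]
            · show (0 : Polynomial K ⧸ Ideal.span {(X : Polynomial K)^3})
                = Ideal.Quotient.mk _ X * 0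
              rw [mul_zero]
        · by_cases hc4 : a < k*p+1
          · have hlt : a+1 < k*p+2 := by omega
            rw [dif_pos hlt, map_smul, hFC (a-(k*p-1)) (by omega) a ha (by omega),
              hFC (a-(k*p-1)+1) (by omega) (a+1) hlt (by omega)]
            have hwa : wf K k p a ≠ 0 := by
              rw [Ne, hwz]
              intro hdvd
              have e5 : a+2 = k*p + (a-(k*p-1)+1) := by omega
              rw [e5, Nat.dvd_add_right (dvd_mul_left p k)] at hdvd
              have := Nat.eq_zero_of_dvd_of_lt hdvd (by omega)
              omega
            refine Prod.ext ?_ (Prod.ext ?_ ?_)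
            · show wf K k p a • (0 : Polynomial K ⧸ Ideal.span {(X : Polynomial K)^(p-1)})
                = Ideal.Quotient.mk _ X * 0
              rw [smul_zero, mul_zero]
            · funext i
              show wf K k p a • (0 : Polynomial K ⧸ Ideal.span {(X : Polynomial K)^p})
                = Ideal.Quotient.mk _ X * 0
              rw [smul_zero, mul_zero]
            · show wf K k p a • Ideal.Quotient.mk _ (monomial (a-(k*p-1)+1) (c (a+1)))
                = Ideal.Quotient.mk _ X * Ideal.Quotient.mk _ (monomial (a-(k*p-1)) (c a))
              rw [← map_mul, X_mul_monomial, ← TotalAux.mk_smul, smul_monomial, smul_eq_mul,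
                hrel a hwa]
          · rw [dif_neg (by omega), map_zero, hFC 2 (by omega) a ha (by omega)]
            refine Prod.ext ?_ (Prod.ext ?_ ?_)
            · show (0 : Polynomial K ⧸ Ideal.span {(X : Polynomial K)^(p-1)})
                = Ideal.Quotient.mk _ X * 0
              rw [mul_zero]
            · funext i
              show (0 : Polynomial K ⧸ Ideal.span {(X : Polynomial K)^p})
                = Ideal.Quotient.mk _ X * 0
              rw [mul_zero]
            · show (0 : Polynomial K ⧸ Ideal.span {(X : Polynomial K)^3})
                = Ideal.Quotient.mk _ X * Ideal.Quotient.mk _ (monomial 2 (c a))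
              rw [← map_mul, X_mul_monomial,
                TotalAux.mk_monomial_eq_zero K 3 (2+1) (c a) (by omega)]
    refine ⟨F.linearEquivOfInjective hFinj hdim, ?_⟩
    intro v
    simp only [LinearMap.linearEquivOfInjective_apply]
    have h1 : F (D v) = Xmul (F v) := by
      rw [← LinearMap.comp_apply, heq, LinearMap.comp_apply]
    rw [h1, hXdef]
    simp only [LinearMap.prodMap_apply, LinearMap.pi_apply, LinearMap.comp_apply,
      LinearMap.proj_apply, LinearMap.mulLeft_apply]
    rfl
  · intro hk0
    subst hk0
    classical
    set c : ℕ → K := TotalAux.segC K (wf K 0 p) with hcdef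
    have hcne : ∀ j, c j ≠ 0 := TotalAux.segC_ne_zero K _
    have hrel : ∀ j, wf K 0 p j ≠ 0 → wf K 0 p j * c (j+1) = c j := TotalAux.segC_rel K _
    have hb2 : 0 + 2 ≤ 0*p+2 := by omega
    set F : (Fin (0*p+2) → K) →ₗ[K] (Polynomial K ⧸ Ideal.span {(X : Polynomial K)^2}) :=
      TotalAux.segMap K (0*p+2) 2 c 0 hb2 with hFdef
    have hFinj : Function.Injective F := by
      rw [injective_iff_map_eq_zero]
      intro v hv
      funext j
      rcases j with ⟨a, ha⟩
      show v ⟨a, ha⟩ = 0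
      exact TotalAux.segMap_eq_zero' K _ _ c 0 hb2 v hv a ha (by omega) (by omega) (hcne a)
    haveI := TotalAux.finiteDimensional_quot K 2
    have hdim : Module.finrank K (Fin (0*p+2) → K) =
        Module.finrank K (Polynomial K ⧸ Ideal.span {(X : Polynomial K)^2}) := by
      rw [Module.finrank_pi, TotalAux.finrank_quot, Fintype.card_fin]
      omega
    have heq : F ∘ₗ D = (LinearMap.mulLeft K
        (Ideal.Quotient.mk (Ideal.span {(X : Polynomial K)^2}) X)) ∘ₗ F := by
      apply Module.Basis.ext (Pi.basisFun K (Fin (0*p+2)))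
      intro j
      rcases j with ⟨a, ha⟩
      rw [Pi.basisFun_apply, LinearMap.comp_apply, LinearMap.comp_apply, hDn a ha]
      have ha2 : a = 0 ∨ a = 1 := by omega
      rcases ha2 with h | h
      · subst h
        have hlt : 0 + 1 < 0*p+2 := by omega
        have hw0 : wf K 0 p 0 ≠ 0 := by
          rw [Ne, hwz]
          intro hdvd
          have := Nat.le_of_dvd (by omega) hdvd
          omega
        rw [dif_pos hlt, map_smul,
          TotalAux.segMap_single' K _ _ c 0 hb2 1 (by omega) (0+1) hlt (by omega),
          TotalAux.segMap_single' K _ _ c 0 hb2 0 (by omega) 0 ha (by omega),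
          LinearMap.mulLeft_apply, ← map_mul, X_mul_monomial, ← TotalAux.mk_smul,
          smul_monomial, smul_eq_mul, hrel 0 hw0]
      · subst h
        rw [dif_neg (by omega), map_zero,
          TotalAux.segMap_single' K _ _ c 0 hb2 1 (by omega) 1 ha (by omega),
          LinearMap.mulLeft_apply, ← map_mul, X_mul_monomial,
          TotalAux.mk_monomial_eq_zero K 2 (1+1) (c 1) (by omega)]
    refine ⟨F.linearEquivOfInjective hFinj hdim, ?_⟩
    intro v
    simp only [LinearMap.linearEquivOfInjective_apply]
    have h1 : F (D v) = LinearMap.mulLeft K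
        (Ideal.Quotient.mk (Ideal.span {(X : Polynomial K)^2}) X) (F v) := by
      rw [← LinearMap.comp_apply, heq]
      rfl
    rw [h1, LinearMap.mulLeft_apply]

end Main
end

section
/- Let 𝔞 be the ideal of K[x₁,x₂,y₁,y₂] generated by x₁+x₂−y₁−y₂ and x₁x₂−y₁y₂, let D be the K-derivation with D(x_i) = x_i² and D(y_i) = y_i², and set e = (x₂−x₁) + (y₂−y₁). Then D(e) + (y₂ − x₁ − 2x₂)·e ∈ 𝔞. (This expresses that the map φ : q⁴R^{x₁+3x₂} → q²(^{x₂}B^{x₂}), 1 ↦ (x₂−x₁)⊗1 + 1⊗(x₂−x₁), appearing in the filtration used to prove Markov II invariance, is a morphism of p-DG bimodules.) -/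
open MvPolynomial

/-- With `x₁ = X 0, x₂ = X 1, y₁ = X 2, y₂ = X 3`, `𝔞 = (x₁+x₂−y₁−y₂, x₁x₂−y₁y₂)` and
`e = (x₂−x₁) + (y₂−y₁)`, one has `D(e) + (y₂ − x₁ − 2x₂)·e ∈ 𝔞`, expressing that the map
`φ` in the Markov II filtration is a morphism of `p`-DG bimodules. -/
theorem phi_is_pDG_morphism (p : ℕ) (hp : Nat.Prime p) (hodd : Odd p)
    (K : Type*) [Field K] [CharP K p]
    (D : Derivation K (MvPolynomial (Fin 4) K) (MvPolynomial (Fin 4) K))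
    (hD : ∀ i, D (X i) = X i ^ 2) :
    D ((X 1 - X 0) + (X 3 - X 2)) + (X 3 - X 0 - 2 * X 1) * ((X 1 - X 0) + (X 3 - X 2)) ∈
      Ideal.span {X 0 + X 1 - X 2 - X 3, X 0 * X 1 - X 2 * X 3} := by
  rw [map_add, map_sub, map_sub, hD, hD, hD, hD, Ideal.mem_span_pair]
  exact ⟨X 2 - X 1 - 2 * X 3, 2, by ring⟩
end
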